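/- arXiv:2502.03415 — 8 statements merged into one kernel-verified Lean document; each statement's English description precedes it below -/
import Mathlib

section
/- In C(V,Q) the following factorization holds: (e₁·e₂·⋯·e_{2n}) · (f_{2n}·f_{2n−1}·⋯·f₁) = ∏_{k=1}^{n} ( f_{2k−1}·f_{2k}·e_{2k}·e_{2k−1} + e_{2k−1}·f_{2k−1} + e_{2k}·f_{2k} − 1 ), where the product on the right is taken in order of increasing k (its factors pairwise commute). -/
/-- The bilinear form `B((a,b),(a',b')) = ∑ i, aᵢ·b'ᵢ` on `(Fin n → ℚ) × (Fin n → ℚ)`. -/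
noncomputable def hypForm (n : ℕ) :
    LinearMap.BilinForm ℚ ((Fin n → ℚ) × (Fin n → ℚ)) :=
  ∑ i : Fin n,
    LinearMap.smulRight
      ((LinearMap.proj i).comp (LinearMap.fst ℚ (Fin n → ℚ) (Fin n → ℚ)))
      ((LinearMap.proj i).comp (LinearMap.snd ℚ (Fin n → ℚ) (Fin n → ℚ)))

/-- The hyperbolic quadratic form `Q(Σ aᵢeᵢ + Σ bᵢfᵢ) = Σ aᵢbᵢ`. -/
noncomputable def hypQ (n : ℕ) : QuadraticForm ℚ ((Fin n → ℚ) × (Fin n → ℚ)) :=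
  LinearMap.BilinMap.toQuadraticMap (hypForm n)

/-- `eᵢ` as an element of the Clifford algebra. -/
noncomputable def eGen (n : ℕ) (i : Fin (2 * n)) : CliffordAlgebra (hypQ (2 * n)) :=
  CliffordAlgebra.ι (hypQ (2 * n)) (Pi.single i 1, 0)

/-- `fᵢ` as an element of the Clifford algebra. -/
noncomputable def fGen (n : ℕ) (i : Fin (2 * n)) : CliffordAlgebra (hypQ (2 * n)) :=
  CliffordAlgebra.ι (hypQ (2 * n)) (0, Pi.single i 1)

/-!
The generators satisfy the canonical anticommutation relations. For a list `l` of indices, the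
nested product `e_{l₁}⋯e_{lₘ} f_{lₘ}⋯f_{l₁}` is a product of an even number of generators, each
of which anticommutes with every generator whose index lies outside `l`; so it commutes with those
generators. Hence the nested product over `1, …, 2n` splits into the nested products over the
consecutive pairs `{2k-1, 2k}`, and the anticommutation relations expand each quartic
`e_a e_b f_b f_a` into the stated factor.
-/
section Anticommute

variable {A : Type*} [Ring A]

theorem mul_list_prod_of_anticomm {a : A} :
    ∀ {l : List A}, (∀ x ∈ l, a * x = -(x * a)) →
      a * l.prod = (-1 : ℤ) ^ l.length • (l.prod * a)
  | [], _ => by simp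
  | x :: l, h => by
    have ih := mul_list_prod_of_anticomm fun y hy => h y (List.mem_cons_of_mem x hy)
    rw [List.prod_cons, ← mul_assoc, h x List.mem_cons_self, neg_mul, mul_assoc, ih,
      mul_smul_comm, List.length_cons, pow_succ, mul_smul, neg_one_smul, ← mul_assoc, smul_neg]

theorem commute_list_prod_of_anticomm {a : A} {l : List A}
    (h : ∀ x ∈ l, a * x = -(x * a)) (hl : Even l.length) : Commute a l.prod := by
  rw [Commute, SemiconjBy, mul_list_prod_of_anticomm h, hl.neg_one_pow, one_smul]

theorem mul_mul_mul_eq_of_anticomm {a b c d : A}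
    (hab : a * b = -(b * a)) (hac : a * c = -(c * a)) (had : a * d = 1 - d * a)
    (hbc : b * c = 1 - c * b) (hbd : b * d = -(d * b)) (hcd : c * d = -(d * c)) :
    a * b * c * d = d * c * b * a + a * d + b * c - 1 := by
  calc a * b * c * d = a * (1 - c * b) * d := by rw [← hbc, mul_assoc a]
    _ = a * d - a * c * (b * d) := by noncomm_ring
    _ = a * d - c * (a * d) * b := by rw [hac, hbd]; noncomm_ring
    _ = a * d - c * b + c * d * (a * b) := by rw [had]; noncomm_ring
    _ = d * c * b * a + a * d + b * c - 1 := by rw [hab, hcd, hbc]; noncomm_ring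

end Anticommute

-- The canonical anticommutation relations of fermionic creation and annihilation operators.
structure IsCAR {ι A : Type*} [Ring A] (e f : ι → A) : Prop where
  e_mul_e : ∀ i j, e i * e j = -(e j * e i)
  f_mul_f : ∀ i j, f i * f j = -(f j * f i)
  e_mul_f_of_ne : ∀ {i j}, i ≠ j → e i * f j = -(f j * e i)
  e_mul_f_self : ∀ i, e i * f i = 1 - f i * e i

def nestedProd {ι A : Type*} [Ring A] (e f : ι → A) (l : List ι) : A :=
  (l.map e).prod * (l.reverse.map f).prod

namespace IsCAR

variable {ι A : Type*} [Ring A] {e f : ι → A}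

theorem f_mul_e_of_ne (h : IsCAR e f) {i j : ι} (hij : i ≠ j) : f i * e j = -(e j * f i) := by
  rw [h.e_mul_f_of_ne hij.symm, neg_neg]

theorem commute_f_nestedProd (h : IsCAR e f) {i : ι} {l : List ι} (hi : i ∉ l) :
    Commute (f i) (nestedProd e f l) := by
  rw [nestedProd, ← List.prod_append]
  refine commute_list_prod_of_anticomm ?_ ⟨l.length, by simp⟩
  simp only [List.mem_append, List.mem_map, List.mem_reverse]
  rintro _ (⟨j, hj, rfl⟩ | ⟨j, -, rfl⟩)
  · exact h.f_mul_e_of_ne (ne_of_mem_of_not_mem hj hi).symm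
  · exact h.f_mul_f i j

theorem nestedProd_append (h : IsCAR e f) {l₁ l₂ : List ι} (hl : l₁.Disjoint l₂) :
    nestedProd e f (l₁ ++ l₂) = nestedProd e f l₁ * nestedProd e f l₂ := by
  have hcomm : Commute (nestedProd e f l₂) (l₁.reverse.map f).prod :=
    Commute.list_prod_right _ _ fun _ hx => by
      obtain ⟨i, hi, rfl⟩ := List.mem_map.1 hx
      exact (h.commute_f_nestedProd (hl (List.mem_reverse.1 hi))).symm
  simp only [nestedProd, List.reverse_append, List.map_append, List.prod_append] at hcomm ⊢
  rw [mul_assoc, mul_assoc, ← mul_assoc (l₂.map e).prod, hcomm.eq]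

theorem nestedProd_flatten (h : IsCAR e f) :
    ∀ {L : List (List ι)}, L.flatten.Nodup →
      nestedProd e f L.flatten = (L.map (nestedProd e f)).prod
  | [], _ => by simp [nestedProd]
  | l :: L, hL => by
    rw [List.flatten_cons, List.nodup_append] at hL
    rw [List.flatten_cons, h.nestedProd_append ?_, h.nestedProd_flatten hL.2.1, List.map_cons,
      List.prod_cons]
    exact fun i hi₁ hi₂ => hL.2.2 i hi₁ i hi₂ rfl

theorem nestedProd_pair (h : IsCAR e f) {i j : ι} (hij : i ≠ j) :
    nestedProd e f [i, j] = f i * f j * e j * e i + e i * f i + e j * f j - 1 := by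
  simp only [nestedProd, List.reverse_cons, List.reverse_nil, List.nil_append, List.cons_append,
    List.map_cons, List.map_nil, List.prod_cons, List.prod_nil, mul_one, ← mul_assoc]
  exact mul_mul_mul_eq_of_anticomm (h.e_mul_e i j) (h.e_mul_f_of_ne hij) (h.e_mul_f_self i)
    (h.e_mul_f_self j) (h.e_mul_f_of_ne hij.symm) (h.f_mul_f j i)

end IsCAR

theorem hypForm_apply (n : ℕ) (x y : (Fin n → ℚ) × (Fin n → ℚ)) :
    hypForm n x y = ∑ i, x.1 i * y.2 i := by
  simp [hypForm]

theorem ι_mul_ι_add_swap_hypQ (n : ℕ) (x y : (Fin n → ℚ) × (Fin n → ℚ)) :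
    CliffordAlgebra.ι (hypQ n) x * CliffordAlgebra.ι (hypQ n) y +
        CliffordAlgebra.ι (hypQ n) y * CliffordAlgebra.ι (hypQ n) x =
      algebraMap ℚ _ (∑ i, (x.1 i * y.2 i + y.1 i * x.2 i)) := by
  rw [CliffordAlgebra.ι_mul_ι_add_swap, hypQ, LinearMap.BilinMap.polar_toQuadraticMap,
    hypForm_apply, hypForm_apply, Finset.sum_add_distrib]

theorem isCAR_eGen_fGen (n : ℕ) : IsCAR (eGen n) (fGen n) where
  e_mul_e i j := eq_neg_of_add_eq_zero_left <| by simp [eGen, ι_mul_ι_add_swap_hypQ]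
  f_mul_f i j := eq_neg_of_add_eq_zero_left <| by simp [fGen, ι_mul_ι_add_swap_hypQ]
  e_mul_f_of_ne {i j} hij := eq_neg_of_add_eq_zero_left <| by
    simp [eGen, fGen, ι_mul_ι_add_swap_hypQ, Pi.single_apply, hij.symm]
  e_mul_f_self i := eq_sub_of_add_eq <| by
    simp [eGen, fGen, ι_mul_ι_add_swap_hypQ, Pi.single_apply]

theorem List.range_two_mul (n : ℕ) :
    List.range (2 * n) = (List.range n).flatMap fun k => [2 * k, 2 * k + 1] := by
  induction n with
  | zero => rfl
  | succ n ih =>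
    rw [List.range_succ, List.flatMap_append, ← ih, Nat.mul_succ, List.range_succ,
      List.range_succ, List.append_assoc]
    rfl

theorem List.finRange_two_mul (n : ℕ) :
    List.finRange (2 * n) = (List.finRange n).flatMap fun k =>
      [⟨2 * k.1, by omega⟩, ⟨2 * k.1 + 1, by omega⟩] := by
  refine List.map_injective_iff.2 Fin.val_injective ?_
  simp only [List.map_flatMap, List.map_cons, List.map_nil, List.map_coe_finRange_eq_range]
  rw [List.range_two_mul, ← List.map_coe_finRange_eq_range, List.flatMap_map]

/-- `(e₁⋯e_{2n})·(f_{2n}⋯f₁) = ∏_{k=1}^{n} (f_{2k−1}f_{2k}e_{2k}e_{2k−1} + e_{2k−1}f_{2k−1}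
+ e_{2k}f_{2k} − 1)` in the Clifford algebra `C(V,Q)`. -/
theorem stmt_3 (n : ℕ) :
    ((List.finRange (2 * n)).map (eGen n)).prod *
      ((List.finRange (2 * n)).reverse.map (fGen n)).prod =
    ((List.finRange n).map (fun k =>
      fGen n ⟨2 * k.1, by have := k.isLt; omega⟩ *
          fGen n ⟨2 * k.1 + 1, by have := k.isLt; omega⟩ *
          eGen n ⟨2 * k.1 + 1, by have := k.isLt; omega⟩ *
          eGen n ⟨2 * k.1, by have := k.isLt; omega⟩ +
        eGen n ⟨2 * k.1, by have := k.isLt; omega⟩ *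
          fGen n ⟨2 * k.1, by have := k.isLt; omega⟩ +
        eGen n ⟨2 * k.1 + 1, by have := k.isLt; omega⟩ *
          fGen n ⟨2 * k.1 + 1, by have := k.isLt; omega⟩ - 1)).prod := by
  have hcar := isCAR_eGen_fGen n
  have hnodup := List.nodup_finRange (2 * n)
  change nestedProd (eGen n) (fGen n) (List.finRange (2 * n)) = _
  rw [List.finRange_two_mul, List.flatMap] at hnodup ⊢
  rw [hcar.nestedProd_flatten hnodup, List.map_map]
  refine congrArg List.prod (List.map_congr_left fun k _ => hcar.nestedProd_pair ?_)
  simp [Fin.ext_iff]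
end

section
/- Set E := e₁·e₂·⋯·e_{2n} and F := f₁·f₂·⋯·f_{2n} in C(V,Q), and let Ψ : C(V,Q) → Λ•V be the canonical linear isomorphism onto the exterior algebra (Mathlib's CliffordAlgebra.equivExterior, available since 2 is invertible in ℚ). Then: (1) in Ψ(E·F − F·E) the homogeneous components of exterior degrees 4n and 4n−1 vanish, while the component of degree 4n−2 is nonzero; (2) in Ψ(E·F + F·E) the homogeneous component of degree 4n is nonzero. -/
/-!
Both `E·F` and `F·E` reorder, up to the same sign, into products over `i` of the commuting
pairs `eᵢfᵢ`, resp. `fᵢeᵢ`. The planes spanned by `eᵢ, fᵢ` are mutually orthogonal, so under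
`Ψ = equivExterior` such a product becomes the exterior product of the factors
`Ψ(eᵢfᵢ) = eᵢ∧fᵢ + ½` and `Ψ(fᵢeᵢ) = -(eᵢ∧fᵢ - ½)`. Expanding `∏ (eᵢ∧fᵢ ± ½)` in the exterior
algebra, the part of degree `≥ 4n - 2` is `P ± ½ S`, with `P = ∏ eᵢ∧fᵢ` of degree `4n` and
`S = ∑ⱼ ∏_{i ≠ j} eᵢ∧fᵢ` of degree `4n - 2`. Hence the top components of `Ψ(EF - FE)` are
`±S` in degree `4n - 2` and zero above, and that of `Ψ(EF + FE)` is `±2P`. Finally `P ≠ 0`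
(contract with the dual basis) and `S ∧ (e₁∧f₁) = P`, so `S ≠ 0`.
-/

set_option synthInstance.maxHeartbeats 1000000
set_option maxHeartbeats 1000000

/-- `E := e₁·e₂·⋯·e_{2n}`. -/
noncomputable def cliffE (n : ℕ) : CliffordAlgebra (hypQ (2 * n)) :=
  ((List.finRange (2 * n)).map (eGen n)).prod

/-- `F := f₁·f₂·⋯·f_{2n}`. -/
noncomputable def cliffF (n : ℕ) : CliffordAlgebra (hypQ (2 * n)) :=
  ((List.finRange (2 * n)).map (fGen n)).prod

/-- Projection onto the homogeneous component of exterior degree `m`. -/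
noncomputable def extProj (n m : ℕ) :
    ExteriorAlgebra ℚ ((Fin (2 * n) → ℚ) × (Fin (2 * n) → ℚ)) →ₗ[ℚ]
      ExteriorAlgebra ℚ ((Fin (2 * n) → ℚ) × (Fin (2 * n) → ℚ)) :=
  GradedAlgebra.proj (fun i : ℕ => ⋀[ℚ]^i ((Fin (2 * n) → ℚ) × (Fin (2 * n) → ℚ))) m

section Anticommute

variable {A ι : Type*} [Ring A]

theorem List.prod_mul_eq_neg_one_pow_mul_of_anticommute {x : A} {l : List A}
    (h : ∀ a ∈ l, a * x = -(x * a)) : l.prod * x = (-1) ^ l.length * (x * l.prod) := by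
  induction l with
  | nil => simp
  | cons a t ih =>
    rw [List.prod_cons, mul_assoc, ih fun b hb => h b (List.mem_cons_of_mem _ hb),
      ((Commute.neg_one_right a).pow_right _).left_comm, ← mul_assoc a, h a List.mem_cons_self]
    simp [pow_succ, mul_assoc]

theorem List.prod_map_mul_prod_map_of_anticommute (e f : ι → A)
    (h : ∀ i j, i ≠ j → e i * f j = -(f j * e i)) {l : List ι} (hl : l.Nodup) :
    (l.map e).prod * (l.map f).prod
      = (-1) ^ l.length.choose 2 * (l.map fun i => e i * f i).prod := by
  induction l with
  | nil => simp
  | cons i t ih =>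
    obtain ⟨hit, ht⟩ := List.nodup_cons.mp hl
    have hmove : (t.map e).prod * f i = (-1) ^ t.length * (f i * (t.map e).prod) := by
      rw [← length_map e]
      exact prod_mul_eq_neg_one_pow_mul_of_anticommute <| forall_mem_map.mpr
        fun j hj => h j i fun hji => hit (hji ▸ hj)
    have hchoose : (t.length + 1).choose 2 = t.length + t.length.choose 2 := by
      simp [Nat.choose_succ_succ', Nat.choose_one_right]
    simp only [List.map_cons, List.prod_cons, List.length_cons, hchoose, pow_add]
    rw [mul_assoc, ← mul_assoc _ (f i), hmove, mul_assoc, mul_assoc, ih ht,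
      ((Commute.neg_one_right _).pow_right _).left_comm,
      ((Commute.neg_one_right _).pow_right _).left_comm,
      ((Commute.neg_one_right _).pow_right _).left_comm]
    simp only [mul_assoc]

end Anticommute

section SquareZero

variable {A ι : Type*} [Ring A] {X : ι → A}

theorem commute_list_prod_map (hcomm : ∀ i j, Commute (X i) (X j)) (i : ι) (l : List ι) :
    Commute (X i) (l.map X).prod :=
  Commute.list_prod_right _ _ (List.forall_mem_map.mpr fun j _ => hcomm i j)

theorem list_prod_map_mul_eq_zero_of_mem (hcomm : ∀ i j, Commute (X i) (X j))
    (hsq : ∀ i, X i * X i = 0) {j : ι} {l : List ι} (hj : j ∈ l) : (l.map X).prod * X j = 0 := by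
  induction l with
  | nil => simp at hj
  | cons i t ih =>
    rw [List.map_cons, List.prod_cons, mul_assoc]
    rcases List.mem_cons.mp hj with rfl | hjt
    · rw [← (commute_list_prod_map hcomm j t).eq, ← mul_assoc, hsq, zero_mul]
    · rw [ih hjt, mul_zero]

variable [DecidableEq ι]

def sumProdErase (X : ι → A) (l : List ι) : A :=
  (l.map fun j => ((l.erase j).map X).prod).sum

@[simp] theorem sumProdErase_nil : sumProdErase X [] = 0 := rfl

theorem sumProdErase_cons {i : ι} {t : List ι} (hit : i ∉ t) :
    sumProdErase X (i :: t) = (t.map X).prod + X i * sumProdErase X t := by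
  have hmap : t.map (fun j => (((i :: t).erase j).map X).prod)
      = t.map fun j => X i * ((t.erase j).map X).prod :=
    List.map_congr_left fun j hj => by
      rw [List.erase_cons_tail (by simpa using fun hij : i = j => hit (hij ▸ hj)), List.map_cons,
        List.prod_cons]
  rw [sumProdErase, List.map_cons, List.sum_cons, List.erase_cons_head, hmap,
    List.sum_map_mul_left, sumProdErase]

theorem commute_sumProdErase (hcomm : ∀ i j, Commute (X i) (X j)) (i : ι) (l : List ι) :
    Commute (X i) (sumProdErase X l) :=
  Commute.list_sum_right _ _ (List.forall_mem_map.mpr fun _ _ => commute_list_prod_map hcomm i _)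

theorem sumProdErase_mul_of_mem (hcomm : ∀ i j, Commute (X i) (X j)) (hsq : ∀ i, X i * X i = 0)
    {j : ι} {l : List ι} (hl : l.Nodup) (hj : j ∈ l) :
    sumProdErase X l * X j = (l.map X).prod := by
  induction l with
  | nil => simp at hj
  | cons i t ih =>
    obtain ⟨hit, ht⟩ := List.nodup_cons.mp hl
    rw [sumProdErase_cons hit, add_mul, List.map_cons, List.prod_cons, mul_assoc]
    rcases List.mem_cons.mp hj with rfl | hjt
    · rw [← (commute_sumProdErase hcomm j t).eq, ← mul_assoc, hsq, zero_mul, add_zero,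
        (commute_list_prod_map hcomm j t).eq]
    · rw [list_prod_map_mul_eq_zero_of_mem hcomm hsq hjt, ih ht hjt, zero_add]

end SquareZero

namespace GradedAlgebra

variable {R A ι : Type*} [CommRing R] [Ring A] [Algebra R A] {𝒜 : ℕ → Submodule R A}
  [GradedAlgebra 𝒜]

theorem proj_of_mem {k : ℕ} {x : A} (hx : x ∈ 𝒜 k) : proj 𝒜 k x = x := by
  rw [proj_apply, DirectSum.decompose_of_mem_same 𝒜 hx]

theorem proj_of_mem_of_ne {k m : ℕ} {x : A} (hx : x ∈ 𝒜 k) (h : k ≠ m) : proj 𝒜 m x = 0 := by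
  rw [proj_apply, DirectSum.decompose_of_mem_ne 𝒜 hx h]

theorem list_prod_map_mem {X : ι → A} {k : ℕ} (hX : ∀ i, X i ∈ 𝒜 k) (l : List ι) :
    (l.map X).prod ∈ 𝒜 (k * l.length) := by
  simpa [mul_comm] using SetLike.list_prod_map_mem_graded l (fun _ => k) X fun i _ => hX i

variable (𝒜) in
def degreeLT (d : ℕ) : Submodule R A :=
  ⨅ (m : ℕ) (_ : d ≤ m), LinearMap.ker (proj 𝒜 m)

theorem mem_degreeLT {d : ℕ} {x : A} : x ∈ degreeLT 𝒜 d ↔ ∀ m, d ≤ m → proj 𝒜 m x = 0 := by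
  simp [degreeLT]

theorem degreeLT_mono {d d' : ℕ} (h : d ≤ d') : degreeLT 𝒜 d ≤ degreeLT 𝒜 d' :=
  fun _ hx => mem_degreeLT.mpr fun m hm => mem_degreeLT.mp hx m (h.trans hm)

theorem mem_degreeLT_of_mem {k d : ℕ} {x : A} (hx : x ∈ 𝒜 k) (h : k < d) : x ∈ degreeLT 𝒜 d :=
  mem_degreeLT.mpr fun _ hm => proj_of_mem_of_ne hx (by omega)

theorem mul_mem_degreeLT {i d : ℕ} {a x : A} (ha : a ∈ 𝒜 i) (hx : x ∈ degreeLT 𝒜 d) :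
    a * x ∈ degreeLT 𝒜 (i + d) := by
  refine mem_degreeLT.mpr fun m hm => ?_
  rw [proj_apply, DirectSum.coe_decompose_mul_of_left_mem_of_le 𝒜 ha (by omega), ← proj_apply,
    mem_degreeLT.mp hx _ (by omega), mul_zero]

variable [DecidableEq ι] {X : ι → A}

theorem sumProdErase_mem {k : ℕ} (hX : ∀ i, X i ∈ 𝒜 k) (l : List ι) :
    sumProdErase X l ∈ 𝒜 (k * (l.length - 1)) := by
  refine list_sum_mem (List.forall_mem_map.mpr fun j hj => ?_)
  simpa [List.length_erase_of_mem hj] using list_prod_map_mem hX (l.erase j)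

theorem list_prod_add_algebraMap_sub_mem_degreeLT (hX : ∀ i, X i ∈ 𝒜 2) (β : R)
    {l : List ι} (hl : l.Nodup) :
    (l.map fun i => X i + algebraMap R A β).prod - (l.map X).prod - β • sumProdErase X l
      ∈ degreeLT 𝒜 (2 * l.length - 2) := by
  induction l with
  | nil => simp
  | cons i t ih =>
    obtain ⟨hit, ht⟩ := List.nodup_cons.mp hl
    set r := (t.map fun i => X i + algebraMap R A β).prod - (t.map X).prod - β • sumProdErase X t
    have hG : (t.map fun i => X i + algebraMap R A β).prod
        = r + (t.map X).prod + β • sumProdErase X t := by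
      simp only [r]; abel
    have hr : ((i :: t).map fun i => X i + algebraMap R A β).prod - ((i :: t).map X).prod
        - β • sumProdErase X (i :: t) = X i * r + β • r + β ^ 2 • sumProdErase X t := by
      rw [List.map_cons, List.prod_cons, List.map_cons, List.prod_cons, sumProdErase_cons hit, hG]
      simp only [add_mul, mul_add, Algebra.algebraMap_eq_smul_one, smul_mul_assoc, one_mul,
        mul_smul_comm]
      module
    rw [hr]
    -- for `t = []` the truncated bound `2 * 1 - 2 = 0` has no room for `X i * r`, but `r = 0`
    rcases eq_or_ne t [] with rfl | htne
    · simp [r]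
    have hlen : 1 ≤ t.length := List.length_pos_iff.mpr htne
    simp only [List.length_cons]
    refine add_mem (add_mem ?_ ?_) ?_
    · exact degreeLT_mono (by omega) (mul_mem_degreeLT (hX i) (ih ht))
    · exact degreeLT_mono (by omega) (Submodule.smul_mem _ _ (ih ht))
    · exact Submodule.smul_mem _ _ (mem_degreeLT_of_mem (sumProdErase_mem hX t) (by omega))

theorem proj_list_prod_add_algebraMap (hX : ∀ i, X i ∈ 𝒜 2) (β : R) {l : List ι} (hl : l.Nodup)
    {m : ℕ} (hm : 2 * l.length - 2 ≤ m) :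
    proj 𝒜 m (l.map fun i => X i + algebraMap R A β).prod
      = proj 𝒜 m (l.map X).prod + β • proj 𝒜 m (sumProdErase X l) := by
  have h := mem_degreeLT.mp (list_prod_add_algebraMap_sub_mem_degreeLT hX β hl) m hm
  rw [map_sub, map_sub, map_smul, sub_sub, sub_eq_zero] at h
  exact h

end GradedAlgebra

namespace CliffordAlgebra

variable {R M : Type*} [CommRing R] [AddCommGroup M] [Module R M] {Q : QuadraticForm R M}

theorem contractLeft_list_prod_eq_zero {d : Module.Dual R M} {l : List (CliffordAlgebra Q)}
    (h : ∀ a ∈ l, ∀ x, contractLeft d (a * x) = a * contractLeft d x) :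
    contractLeft d l.prod = 0 := by
  induction l with
  | nil => exact contractLeft_one (Q := Q) d
  | cons a t ih =>
    rw [List.prod_cons, h a List.mem_cons_self,
      ih fun b hb => h b (List.mem_cons_of_mem _ hb), mul_zero]

theorem contractLeft_ι_mul_ι_mul {d : Module.Dual R M} {u w : M} (hu : d u = 0) (hw : d w = 0)
    (x : CliffordAlgebra Q) :
    contractLeft d (ι Q u * ι Q w * x) = ι Q u * ι Q w * contractLeft d x := by
  rw [mul_assoc, contractLeft_ι_mul, contractLeft_ι_mul, hu, hw, zero_smul, zero_smul, zero_sub,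
    zero_sub, mul_neg, neg_neg, mul_assoc]

theorem contractLeft_ι_mul_ι_add_algebraMap_mul {d : Module.Dual R M} {u w : M} (hu : d u = 0)
    (hw : d w = 0) (c : R) (x : CliffordAlgebra Q) :
    contractLeft d ((ι Q u * ι Q w + algebraMap R _ c) * x)
      = (ι Q u * ι Q w + algebraMap R _ c) * contractLeft d x := by
  rw [add_mul, add_mul, map_add, contractLeft_algebraMap_mul, contractLeft_ι_mul_ι_mul hu hw]

variable [Invertible (2 : R)]

theorem _root_.QuadraticMap.IsOrtho.associated_neg_eq_zero {x y : M} (h : Q.IsOrtho x y) :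
    QuadraticMap.associated (-Q) x y = 0 := by
  rw [map_neg, LinearMap.neg_apply, LinearMap.neg_apply, QuadraticMap.associated_isOrtho.mpr h,
    neg_zero]

theorem equivExterior_ι_mul (m : M) (x : CliffordAlgebra Q) :
    equivExterior Q (ι Q m * x) = ExteriorAlgebra.ι R m * equivExterior Q x
      - contractLeft (QuadraticMap.associated (-Q) m) (equivExterior Q x) :=
  changeForm_ι_mul changeForm.associated_neg_proof m x

theorem equivExterior_ι_mul_ι_mul {u w : M} {x : CliffordAlgebra Q}
    (hu : contractLeft (QuadraticMap.associated (-Q) u) (equivExterior Q x) = 0)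
    (hw : contractLeft (QuadraticMap.associated (-Q) w) (equivExterior Q x) = 0) :
    equivExterior Q (ι Q u * ι Q w * x)
      = (ExteriorAlgebra.ι R u * ExteriorAlgebra.ι R w + algebraMap R _ (Q.associated u w))
        * equivExterior Q x := by
  rw [mul_assoc, equivExterior_ι_mul, equivExterior_ι_mul, hw, sub_zero, contractLeft_ι_mul, hu,
    mul_zero, sub_zero, map_neg, LinearMap.neg_apply, LinearMap.neg_apply, neg_smul,
    sub_neg_eq_add, add_mul, mul_assoc, Algebra.smul_def]

theorem equivExterior_list_prod_ι_mul_ι {I : Type*} {u w : I → M}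
    (horth : ∀ i j, i ≠ j →
      Q.IsOrtho (u i) (u j) ∧ Q.IsOrtho (u i) (w j) ∧ Q.IsOrtho (w i) (w j))
    {l : List I} (hl : l.Nodup) :
    equivExterior Q (l.map fun i => ι Q (u i) * ι Q (w i)).prod
      = (l.map fun i => ExteriorAlgebra.ι R (u i) * ExteriorAlgebra.ι R (w i)
          + algebraMap R _ (Q.associated (u i) (w i))).prod := by
  induction l with
  | nil => exact changeForm_one changeForm.associated_neg_proof
  | cons i t ih =>
    obtain ⟨hit, ht⟩ := List.nodup_cons.mp hl
    have hne : ∀ j ∈ t, i ≠ j := fun j hj hij => hit (hij ▸ hj)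
    have hkill : ∀ d : Module.Dual R M, (∀ j ∈ t, d (u j) = 0 ∧ d (w j) = 0) →
        contractLeft d (equivExterior Q (t.map fun i => ι Q (u i) * ι Q (w i)).prod) = 0 :=
      fun d hd => by
        rw [ih ht]
        exact contractLeft_list_prod_eq_zero <| List.forall_mem_map.mpr fun j hj =>
          contractLeft_ι_mul_ι_add_algebraMap_mul (hd j hj).1 (hd j hj).2 _
    simp only [List.map_cons, List.prod_cons]
    rw [equivExterior_ι_mul_ι_mul
      (hkill _ fun j hj => ⟨(horth i j (hne j hj)).1.associated_neg_eq_zero,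
        (horth i j (hne j hj)).2.1.associated_neg_eq_zero⟩)
      (hkill _ fun j hj => ⟨(horth j i (hne j hj).symm).2.1.symm.associated_neg_eq_zero,
        (horth i j (hne j hj)).2.2.associated_neg_eq_zero⟩), ih ht]

end CliffordAlgebra

namespace ExteriorAlgebra

variable {R M : Type*} [CommRing R] [AddCommGroup M] [Module R M]

theorem ι_mul_ι_mem (u w : M) : ι R u * ι R w ∈ ⋀[R]^2 M := by
  rw [exteriorPower, pow_two]
  exact Submodule.mul_mem_mul (LinearMap.mem_range_self _ u) (LinearMap.mem_range_self _ w)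

theorem ι_mul_ι_swap (u w : M) : ι R w * ι R u = -(ι R u * ι R w) :=
  eq_neg_of_add_eq_zero_left (ι_add_mul_swap w u)

theorem commute_ι_mul_ι_ι (u w v : M) : Commute (ι R u * ι R w) (ι R v) := by
  rw [Commute, SemiconjBy, mul_assoc, ι_mul_ι_swap v w, mul_neg, ← mul_assoc, ι_mul_ι_swap v u,
    neg_mul, neg_neg, mul_assoc]

theorem commute_ι_mul_ι (u w u' w' : M) : Commute (ι R u * ι R w) (ι R u' * ι R w') :=
  (commute_ι_mul_ι_ι u w u').mul_right (commute_ι_mul_ι_ι u w w')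

theorem ι_mul_ι_mul_self (u w : M) : ι R u * ι R w * (ι R u * ι R w) = 0 := by
  rw [← mul_assoc, (commute_ι_mul_ι_ι u w u).eq, ← mul_assoc, ι_sq_zero, zero_mul, zero_mul]

theorem list_prod_ι_mul_ι_ne_zero [Nontrivial R] {I : Type*} (b : Module.Basis (I ⊕ I) R M)
    {l : List I} (hl : l.Nodup) :
    (l.map fun i => ι R (b (.inl i)) * ι R (b (.inr i))).prod ≠ 0 := by
  induction l with
  | nil => exact one_ne_zero
  | cons i t ih =>
    -- contracting with the coordinates of `b (.inl i)`, then `b (.inr i)`, strips the first factor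
    obtain ⟨hit, ht⟩ := List.nodup_cons.mp hl
    set P := (t.map fun i => ι R (b (.inl i)) * ι R (b (.inr i))).prod
    have hcontract : ∀ k, (∀ j ∈ t, k ≠ .inl j ∧ k ≠ .inr j) →
        CliffordAlgebra.contractLeft (b.coord k) P = 0 := fun k hk =>
      CliffordAlgebra.contractLeft_list_prod_eq_zero <| List.forall_mem_map.mpr fun j hj =>
        CliffordAlgebra.contractLeft_ι_mul_ι_mul (by simp [(hk j hj).1.symm])
          (by simp [(hk j hj).2.symm])
    have hne : ∀ j ∈ t, i ≠ j := fun j hj hij => hit (hij ▸ hj)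
    have hleft : CliffordAlgebra.contractLeft (b.coord (.inl i))
        (ι R (b (.inl i)) * ι R (b (.inr i)) * P) = ι R (b (.inr i)) * P := by
      rw [mul_assoc, CliffordAlgebra.contractLeft_ι_mul, CliffordAlgebra.contractLeft_ι_mul,
        hcontract _ fun j hj => by simp [hne j hj]]
      simp
    have hright : CliffordAlgebra.contractLeft (b.coord (.inr i)) (ι R (b (.inr i)) * P) = P := by
      rw [CliffordAlgebra.contractLeft_ι_mul, hcontract _ fun j hj => by simp [hne j hj]]
      simp
    rw [List.map_cons, List.prod_cons]
    intro h0
    rw [h0, map_zero] at hleft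
    rw [← hleft, map_zero] at hright
    exact ih ht hright.symm

end ExteriorAlgebra

noncomputable def hypBasis (k : ℕ) :
    Module.Basis (Fin k ⊕ Fin k) ℚ ((Fin k → ℚ) × (Fin k → ℚ)) :=
  (Pi.basisFun ℚ (Fin k)).prod (Pi.basisFun ℚ (Fin k))

noncomputable def hypBivector (k : ℕ) (i : Fin k) :
    ExteriorAlgebra ℚ ((Fin k → ℚ) × (Fin k → ℚ)) :=
  ExteriorAlgebra.ι ℚ (hypBasis k (.inl i)) * ExteriorAlgebra.ι ℚ (hypBasis k (.inr i))

section Hyperbolic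

variable {k : ℕ}

@[simp] theorem hypBasis_inl (i : Fin k) : hypBasis k (.inl i) = (Pi.single i 1, 0) := by
  simp [hypBasis]

@[simp] theorem hypBasis_inr (i : Fin k) : hypBasis k (.inr i) = (0, Pi.single i 1) := by
  simp [hypBasis]

theorem polar_hypQ (v w : (Fin k → ℚ) × (Fin k → ℚ)) :
    QuadraticMap.polar (hypQ k) v w = ∑ i, (v.1 i * w.2 i + w.1 i * v.2 i) := by
  rw [hypQ, LinearMap.BilinMap.polar_toQuadraticMap]
  simp [hypForm, Finset.sum_add_distrib]

theorem hypQ_isOrtho_inl_inl (i j : Fin k) :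
    (hypQ k).IsOrtho (hypBasis k (.inl i)) (hypBasis k (.inl j)) :=
  QuadraticMap.isOrtho_polarBilin.mp (by simp [polar_hypQ])

theorem hypQ_isOrtho_inr_inr (i j : Fin k) :
    (hypQ k).IsOrtho (hypBasis k (.inr i)) (hypBasis k (.inr j)) :=
  QuadraticMap.isOrtho_polarBilin.mp (by simp [polar_hypQ])

theorem hypQ_isOrtho_inl_inr {i j : Fin k} (h : i ≠ j) :
    (hypQ k).IsOrtho (hypBasis k (.inl i)) (hypBasis k (.inr j)) :=
  QuadraticMap.isOrtho_polarBilin.mp (by simp [polar_hypQ, Pi.single_apply, h.symm])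

theorem associated_hypQ_inl_inr (i : Fin k) :
    (hypQ k).associated (hypBasis k (.inl i)) (hypBasis k (.inr i)) = 2⁻¹ := by
  rw [QuadraticMap.associated_apply, ← QuadraticMap.polar, polar_hypQ]
  simp [Pi.single_apply]

theorem associated_hypQ_inr_inl (i : Fin k) :
    (hypQ k).associated (hypBasis k (.inr i)) (hypBasis k (.inl i)) = 2⁻¹ := by
  rw [QuadraticMap.associated_isSymm, associated_hypQ_inl_inr]

theorem hypBivector_mem (i : Fin k) : hypBivector k i ∈ ⋀[ℚ]^2 _ :=
  ExteriorAlgebra.ι_mul_ι_mem _ _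

theorem commute_hypBivector (i j : Fin k) : Commute (hypBivector k i) (hypBivector k j) :=
  ExteriorAlgebra.commute_ι_mul_ι _ _ _ _

theorem hypBivector_mul_self (i : Fin k) : hypBivector k i * hypBivector k i = 0 :=
  ExteriorAlgebra.ι_mul_ι_mul_self _ _

end Hyperbolic

section Clifford

open CliffordAlgebra

variable {n : ℕ}

theorem eGen_eq (i : Fin (2 * n)) : eGen n i = ι (hypQ (2 * n)) (hypBasis _ (.inl i)) := by
  rw [eGen, hypBasis_inl]

theorem fGen_eq (i : Fin (2 * n)) : fGen n i = ι (hypQ (2 * n)) (hypBasis _ (.inr i)) := by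
  rw [fGen, hypBasis_inr]

theorem eGen_mul_fGen_of_ne {i j : Fin (2 * n)} (h : i ≠ j) :
    eGen n i * fGen n j = -(fGen n j * eGen n i) := by
  rw [eGen_eq, fGen_eq, ι_mul_ι_comm_of_isOrtho (hypQ_isOrtho_inl_inr h)]

theorem cliffE_mul_cliffF :
    cliffE n * cliffF n = ((-1 : ℚ) ^ (2 * n).choose 2)
      • ((List.finRange (2 * n)).map fun i => eGen n i * fGen n i).prod := by
  rw [cliffE, cliffF, List.prod_map_mul_prod_map_of_anticommute _ _
    (fun i j h => eGen_mul_fGen_of_ne h) (List.nodup_finRange _), List.length_finRange,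
    Algebra.smul_def, map_pow, map_neg, map_one]

theorem cliffF_mul_cliffE :
    cliffF n * cliffE n = ((-1 : ℚ) ^ (2 * n).choose 2)
      • ((List.finRange (2 * n)).map fun i => fGen n i * eGen n i).prod := by
  rw [cliffE, cliffF, List.prod_map_mul_prod_map_of_anticommute _ _
    (fun i j h => (eGen_mul_fGen_of_ne h.symm).symm ▸ (neg_neg _).symm)
    (List.nodup_finRange _), List.length_finRange, Algebra.smul_def, map_pow, map_neg, map_one]

theorem equivExterior_list_prod_eGen_mul_fGen {l : List (Fin (2 * n))} (hl : l.Nodup) :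
    equivExterior (hypQ (2 * n)) (l.map fun i => eGen n i * fGen n i).prod
      = (l.map fun i => hypBivector _ i + algebraMap ℚ _ 2⁻¹).prod := by
  simp only [eGen_eq, fGen_eq]
  rw [equivExterior_list_prod_ι_mul_ι (fun i j h => ⟨hypQ_isOrtho_inl_inl i j,
    hypQ_isOrtho_inl_inr h, hypQ_isOrtho_inr_inr i j⟩) hl]
  simp only [associated_hypQ_inl_inr, hypBivector]

theorem equivExterior_list_prod_fGen_mul_eGen {l : List (Fin (2 * n))} (hl : l.Nodup) :
    equivExterior (hypQ (2 * n)) (l.map fun i => fGen n i * eGen n i).prod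
      = (-1) ^ l.length * (l.map fun i => hypBivector _ i + algebraMap ℚ _ (-2⁻¹)).prod := by
  simp only [eGen_eq, fGen_eq]
  rw [equivExterior_list_prod_ι_mul_ι (fun i j h => ⟨hypQ_isOrtho_inr_inr i j,
    (hypQ_isOrtho_inl_inr h.symm).symm, hypQ_isOrtho_inl_inl i j⟩) hl,
    ← List.length_map (fun i => hypBivector _ i + algebraMap ℚ _ (-2⁻¹)), ← List.prod_map_neg,
    List.map_map]
  congr 1
  refine List.map_congr_left fun i _ => ?_
  rw [Function.comp_apply, associated_hypQ_inr_inl, hypBivector, ExteriorAlgebra.ι_mul_ι_swap,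
    map_neg]
  abel

theorem equivExterior_cliffE_mul_cliffF :
    equivExterior (hypQ (2 * n)) (cliffE n * cliffF n)
      = ((-1 : ℚ) ^ (2 * n).choose 2)
        • ((List.finRange (2 * n)).map fun i => hypBivector _ i + algebraMap ℚ _ 2⁻¹).prod := by
  rw [cliffE_mul_cliffF, map_smul,
    equivExterior_list_prod_eGen_mul_fGen (List.nodup_finRange _)]

theorem equivExterior_cliffF_mul_cliffE :
    equivExterior (hypQ (2 * n)) (cliffF n * cliffE n)
      = ((-1 : ℚ) ^ (2 * n).choose 2)
        • ((List.finRange (2 * n)).map fun i => hypBivector _ i + algebraMap ℚ _ (-2⁻¹)).prod := by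
  rw [cliffF_mul_cliffE, map_smul,
    equivExterior_list_prod_fGen_mul_eGen (List.nodup_finRange _), List.length_finRange,
    Even.neg_one_pow ⟨n, two_mul n⟩, one_mul]

end Clifford

section TopComponents

open CliffordAlgebra

variable {n : ℕ}

theorem extProj_list_prod_hypBivector_add_algebraMap (β : ℚ) {m : ℕ} (hm : 4 * n - 2 ≤ m) :
    extProj n m ((List.finRange (2 * n)).map fun i => hypBivector _ i + algebraMap ℚ _ β).prod
      = extProj n m ((List.finRange (2 * n)).map (hypBivector _)).prod
        + β • extProj n m (sumProdErase (hypBivector _) (List.finRange (2 * n))) :=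
  GradedAlgebra.proj_list_prod_add_algebraMap (𝒜 := fun i : ℕ => ⋀[ℚ]^i _) hypBivector_mem β
    (List.nodup_finRange _) (by rw [List.length_finRange]; omega)

theorem extProj_equivExterior_commutator {m : ℕ} (hm : 4 * n - 2 ≤ m) :
    extProj n m
        (equivExterior (hypQ (2 * n)) (cliffE n * cliffF n - cliffF n * cliffE n))
      = ((-1 : ℚ) ^ (2 * n).choose 2)
        • extProj n m (sumProdErase (hypBivector _) (List.finRange (2 * n))) := by
  rw [map_sub, equivExterior_cliffE_mul_cliffF, equivExterior_cliffF_mul_cliffE, map_sub,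
    map_smul, map_smul, extProj_list_prod_hypBivector_add_algebraMap _ hm,
    extProj_list_prod_hypBivector_add_algebraMap _ hm]
  module

theorem list_prod_hypBivector_mem :
    ((List.finRange (2 * n)).map (hypBivector _)).prod ∈ ⋀[ℚ]^(4 * n) _ := by
  have h := GradedAlgebra.list_prod_map_mem (𝒜 := fun i : ℕ => ⋀[ℚ]^i _) hypBivector_mem
    (List.finRange (2 * n))
  rwa [List.length_finRange, ← mul_assoc] at h

theorem sumProdErase_hypBivector_mem :
    sumProdErase (hypBivector _) (List.finRange (2 * n)) ∈ ⋀[ℚ]^(4 * n - 2) _ := by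
  have h := GradedAlgebra.sumProdErase_mem (𝒜 := fun i : ℕ => ⋀[ℚ]^i _) hypBivector_mem
    (List.finRange (2 * n))
  rwa [List.length_finRange, show 2 * (2 * n - 1) = 4 * n - 2 by omega] at h

theorem list_prod_hypBivector_ne_zero :
    ((List.finRange (2 * n)).map (hypBivector _)).prod ≠ 0 :=
  ExteriorAlgebra.list_prod_ι_mul_ι_ne_zero (hypBasis (2 * n)) (List.nodup_finRange _)

theorem sumProdErase_hypBivector_ne_zero (hn : 1 ≤ n) :
    sumProdErase (hypBivector _) (List.finRange (2 * n)) ≠ 0 := fun h =>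
  list_prod_hypBivector_ne_zero <| by
    rw [← sumProdErase_mul_of_mem commute_hypBivector hypBivector_mul_self (List.nodup_finRange _)
      (List.mem_finRange (⟨0, by omega⟩ : Fin (2 * n))), h, zero_mul]

theorem extProj_equivExterior_commutator_eq_zero {m : ℕ} (hm : 4 * n - 2 < m) :
    extProj n m
      (equivExterior (hypQ (2 * n)) (cliffE n * cliffF n - cliffF n * cliffE n)) = 0 := by
  rw [extProj_equivExterior_commutator hm.le, extProj,
    GradedAlgebra.proj_of_mem_of_ne (𝒜 := fun i : ℕ => ⋀[ℚ]^i _) sumProdErase_hypBivector_mem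
      hm.ne, smul_zero]

theorem extProj_equivExterior_commutator_ne_zero (hn : 1 ≤ n) :
    extProj n (4 * n - 2)
      (equivExterior (hypQ (2 * n)) (cliffE n * cliffF n - cliffF n * cliffE n)) ≠ 0 := by
  rw [extProj_equivExterior_commutator le_rfl, extProj,
    GradedAlgebra.proj_of_mem (𝒜 := fun i : ℕ => ⋀[ℚ]^i _) sumProdErase_hypBivector_mem]
  exact smul_ne_zero (pow_ne_zero _ (by norm_num)) (sumProdErase_hypBivector_ne_zero hn)

theorem extProj_equivExterior_anticommutator_ne_zero :
    extProj n (4 * n)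
      (equivExterior (hypQ (2 * n)) (cliffE n * cliffF n + cliffF n * cliffE n)) ≠ 0 := by
  have h : extProj n (4 * n)
        (equivExterior (hypQ (2 * n)) (cliffE n * cliffF n + cliffF n * cliffE n))
      = (2 * (-1 : ℚ) ^ (2 * n).choose 2) • ((List.finRange (2 * n)).map (hypBivector _)).prod := by
    rw [map_add, equivExterior_cliffE_mul_cliffF, equivExterior_cliffF_mul_cliffE, map_add,
      map_smul, map_smul, extProj_list_prod_hypBivector_add_algebraMap _ (by omega),
      extProj_list_prod_hypBivector_add_algebraMap _ (by omega), extProj,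
      GradedAlgebra.proj_of_mem (𝒜 := fun i : ℕ => ⋀[ℚ]^i _) list_prod_hypBivector_mem]
    module
  rw [h]
  exact smul_ne_zero (mul_ne_zero two_ne_zero (pow_ne_zero _ (by norm_num)))
    list_prod_hypBivector_ne_zero

end TopComponents

/-- Under the canonical linear isomorphism
`Ψ : C(V,Q) ≃ Λ•V` (Mathlib's `CliffordAlgebra.equivExterior`): in `Ψ(E·F − F·E)` the components
of exterior degrees `4n` and `4n−1` vanish while the degree-`4n−2` component is nonzero, and in
`Ψ(E·F + F·E)` the degree-`4n` component is nonzero. -/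
theorem stmt_4 (n : ℕ) (hn : 1 ≤ n) :
    extProj n (4 * n)
      (CliffordAlgebra.equivExterior (hypQ (2 * n))
        (cliffE n * cliffF n - cliffF n * cliffE n)) = 0 ∧
    extProj n (4 * n - 1)
      (CliffordAlgebra.equivExterior (hypQ (2 * n))
        (cliffE n * cliffF n - cliffF n * cliffE n)) = 0 ∧
    extProj n (4 * n - 2)
      (CliffordAlgebra.equivExterior (hypQ (2 * n))
        (cliffE n * cliffF n - cliffF n * cliffE n)) ≠ 0 ∧
    extProj n (4 * n)
      (CliffordAlgebra.equivExterior (hypQ (2 * n))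
        (cliffE n * cliffF n + cliffF n * cliffE n)) ≠ 0 :=
  ⟨extProj_equivExterior_commutator_eq_zero (by omega),
    extProj_equivExterior_commutator_eq_zero (by omega),
    extProj_equivExterior_commutator_ne_zero hn, extProj_equivExterior_anticommutator_ne_zero⟩
end

section
/- Let F be a field, n ≥ 1, and V an F-vector space with basis e₁,…,e_{4n}, equipped with a quadratic form Q such that Q(eᵢ) = 0 for all i and whose polar form B satisfies B(eᵢ, e_{2n+i}) = 1 for 1 ≤ i ≤ 2n and B(eᵢ, eⱼ) = 0 for all other pairs i < j. For λ ∈ F^×, set g := ∏_{k=1}^{2n} ( λ⁻¹ + (λ − λ⁻¹)·eₖ·e_{2n+k} ) in the Clifford algebra C(V,Q) (the factors pairwise commute). Then g lies in the spin group of Q: g lies in the even part of C(V,Q), g·star(g) = 1, and conjugation by g preserves the image of V; moreover g·eₖ·star(g) = λ²·eₖ for 1 ≤ k ≤ 2n and g·e_{2n+k}·star(g) = λ⁻²·e_{2n+k} for 1 ≤ k ≤ 2n. -/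
/-- The bilinear form `B((a,b),(a',b')) = ∑ i, aᵢ·b'ᵢ` on `(Fin n → F) × (Fin n → F)`. -/
noncomputable def pairForm (F : Type*) [Field F] (n : ℕ) :
    LinearMap.BilinForm F ((Fin n → F) × (Fin n → F)) :=
  ∑ i : Fin n,
    LinearMap.smulRight
      ((LinearMap.proj i).comp (LinearMap.fst F (Fin n → F) (Fin n → F)))
      ((LinearMap.proj i).comp (LinearMap.snd F (Fin n → F) (Fin n → F)))

/-- The hyperbolic quadratic form:  `Q` vanishes on the basis vectors `eᵢ = (δᵢ, 0)` and
`e_{2n+i} = (0, δᵢ)`, and its polar form satisfies `B(eᵢ, e_{2n+i}) = 1` with all other pairs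
orthogonal. -/
noncomputable def pairQ (F : Type*) [Field F] (n : ℕ) :
    QuadraticForm F ((Fin n → F) × (Fin n → F)) :=
  LinearMap.BilinMap.toQuadraticMap (pairForm F n)

/-!
Each factor `λ⁻¹ + (λ - λ⁻¹) eₖ e_{2n+k}` equals the product of the two vectors
`λ eₖ + e_{2n+k}` and `λ⁻¹ eₖ + e_{2n+k}`, whose quadratic values `λ` and `λ⁻¹` multiply to `1`;
so it lies in the spin group, and conjugation by it is the composite of the two reflections
`z ↦ B(u, z) u - Q(u) z`. That composite scales `eₖ` by `λ²` and `e_{2n+k}` by `λ⁻²` and fixes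
every vector orthogonal to both, which determines the action of the whole product on each basis
vector.
-/

theorem mul_mul_mul_star_mul {A : Type*} [Semigroup A] [StarMul A] (a b z : A) :
    a * b * z * star (a * b) = a * (b * z * star b) * star a := by
  simp only [star_mul, mul_assoc]

theorem list_prod_map_mul_mul_star_eq_smul {ι R A : Type*} [CommSemiring R] [Semiring A]
    [StarMul A] [Algebra R A] (u : ι → A) (c : ι → R) (z : A) {l : List ι}
    (hl : ∀ i ∈ l, u i * z * star (u i) = c i • z) :
    (l.map u).prod * z * star (l.map u).prod = (l.map c).prod • z := by
  induction l with
  | nil => simp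
  | cons i l ih =>
    rw [List.map_cons, List.map_cons, List.prod_cons, List.prod_cons, mul_mul_mul_star_mul,
      ih fun j hj => hl j (List.mem_cons_of_mem i hj), mul_smul_comm, smul_mul_assoc,
      hl i List.mem_cons_self, smul_smul, mul_comm]

namespace CliffordAlgebra

open QuadraticMap

variable {R M : Type*} [CommRing R] [AddCommGroup M] [Module R M] {Q : QuadraticForm R M}

theorem star_ι_mul_ι (u w : M) : star (ι Q u * ι Q w) = ι Q w * ι Q u := by
  rw [star_mul, star_ι, star_ι, neg_mul_neg]

theorem ι_mem_lipschitzGroup {m : M} (hm : IsUnit (Q m)) :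
    ι Q m ∈ (lipschitzGroup Q).toSubmonoid.map (Units.coeHom _) :=
  ⟨(isUnit_ι_of_isUnit (Q := Q) hm).unit, Subgroup.subset_closure ⟨m, rfl⟩, rfl⟩

theorem ι_mul_ι_mul_star_ι_mul_ι (u w : M) :
    ι Q u * ι Q w * star (ι Q u * ι Q w) = algebraMap R _ (Q u * Q w) := by
  rw [star_ι_mul_ι, mul_assoc, ← mul_assoc (ι Q w), ι_sq_scalar, Algebra.commutes, ← mul_assoc,
    ι_sq_scalar, ← map_mul]

theorem ι_mul_ι_mem_spinGroup {u w : M} (h : Q u * Q w = 1) : ι Q u * ι Q w ∈ spinGroup Q := by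
  have hstar : star (ι Q u * ι Q w) * (ι Q u * ι Q w) = 1 := by
    rw [star_ι_mul_ι, ← star_ι_mul_ι w u, ι_mul_ι_mul_star_ι_mul_ι, mul_comm, h, map_one]
  have hunitary : ι Q u * ι Q w ∈ unitary (CliffordAlgebra Q) := by
    rw [Unitary.mem_iff, ι_mul_ι_mul_star_ι_mul_ι, h, map_one]
    exact ⟨hstar, rfl⟩
  exact ⟨⟨mul_mem (ι_mem_lipschitzGroup (.of_mul_eq_one _ h))
    (ι_mem_lipschitzGroup (.of_mul_eq_one_right _ h)), hunitary⟩, ι_mul_ι_mem_evenOdd_zero Q u w⟩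

theorem ι_mul_ι_mul_ι_mul_star (u w z : M) :
    ι Q u * ι Q w * ι Q z * star (ι Q u * ι Q w) =
      ι Q (polar Q u (polar Q w z • w - Q w • z) • u - Q u • (polar Q w z • w - Q w • z)) := by
  rw [star_ι_mul_ι, ← ι_mul_ι_mul_ι, ← ι_mul_ι_mul_ι]
  simp only [mul_assoc]

theorem list_prod_mul_ι_mul_star_mem_range {l : List (CliffordAlgebra Q)}
    (hl : ∀ a ∈ l, ∀ m, a * ι Q m * star a ∈ LinearMap.range (ι Q)) (m : M) :
    l.prod * ι Q m * star l.prod ∈ LinearMap.range (ι Q) := by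
  induction l generalizing m with
  | nil => simp
  | cons a l ih =>
    obtain ⟨m', hm'⟩ := ih (fun b hb => hl b (List.mem_cons_of_mem a hb)) m
    rw [List.prod_cons, mul_mul_mul_star_mul, ← hm']
    exact hl a List.mem_cons_self m'

def hyperbolicRotor (Q : QuadraticForm R M) (x y : M) (a b : R) : CliffordAlgebra Q :=
  ι Q (a • x + y) * ι Q (b • x + y)

theorem hyperbolicRotor_mul_ι_mul_star_mem_range (x y : M) (a b : R) (z : M) :
    hyperbolicRotor Q x y a b * ι Q z * star (hyperbolicRotor Q x y a b) ∈
      LinearMap.range (ι Q) := by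
  rw [hyperbolicRotor, ι_mul_ι_mul_ι_mul_star]
  exact LinearMap.mem_range_self _ _

section HyperbolicPair

variable {x y : M} (hx : Q x = 0) (hy : Q y = 0) (hxy : polar Q x y = 1)
include hx hy hxy

theorem _root_.QuadraticMap.apply_smul_add_of_hyperbolic (a : R) : Q (a • x + y) = a := by
  rw [QuadraticMap.map_add Q, QuadraticMap.map_smul, hx, hy, polar_smul_left, hxy]
  ring

theorem hyperbolicRotor_eq (a b : R) :
    hyperbolicRotor Q x y a b = algebraMap R _ b + (a - b) • (ι Q x * ι Q y) := by
  have hyx : ι Q y * ι Q x = 1 - ι Q x * ι Q y := by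
    rw [eq_sub_iff_add_eq', ι_mul_ι_add_swap, hxy, map_one]
  simp only [hyperbolicRotor, map_add, map_smul, add_mul, mul_add, smul_mul_assoc, mul_smul_comm,
    ι_sq_scalar, hx, hy, map_zero, smul_zero, hyx]
  rw [Algebra.algebraMap_eq_smul_one]
  module

theorem hyperbolicRotor_mem_spinGroup {a b : R} (hab : a * b = 1) :
    hyperbolicRotor Q x y a b ∈ spinGroup Q := by
  refine ι_mul_ι_mem_spinGroup ?_
  rwa [apply_smul_add_of_hyperbolic hx hy hxy, apply_smul_add_of_hyperbolic hx hy hxy]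

theorem hyperbolicRotor_mul_ι_left_mul_star (a b : R) :
    hyperbolicRotor Q x y a b * ι Q x * star (hyperbolicRotor Q x y a b) = (a ^ 2) • ι Q x := by
  rw [hyperbolicRotor, ι_mul_ι_mul_ι_mul_star, ← map_smul]
  congr 1
  simp only [polar_add_left, polar_smul_left, polar_add_right, polar_smul_right, polar_sub_right,
    polar_self, polar_comm Q y x, apply_smul_add_of_hyperbolic hx hy hxy, hx, hy, hxy]
  module

theorem hyperbolicRotor_mul_ι_right_mul_star (a b : R) :
    hyperbolicRotor Q x y a b * ι Q y * star (hyperbolicRotor Q x y a b) = (b ^ 2) • ι Q y := by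
  rw [hyperbolicRotor, ι_mul_ι_mul_ι_mul_star, ← map_smul]
  congr 1
  simp only [polar_add_left, polar_smul_left, polar_add_right, polar_smul_right, polar_sub_right,
    polar_self, polar_comm Q y x, apply_smul_add_of_hyperbolic hx hy hxy, hx, hy, hxy]
  module

theorem hyperbolicRotor_mul_ι_mul_star_of_polar_eq_zero {z : M} (hxz : polar Q x z = 0)
    (hyz : polar Q y z = 0) (a b : R) :
    hyperbolicRotor Q x y a b * ι Q z * star (hyperbolicRotor Q x y a b) = (a * b) • ι Q z := by
  rw [hyperbolicRotor, ι_mul_ι_mul_ι_mul_star, ← map_smul]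
  congr 1
  simp only [polar_add_left, polar_smul_left, polar_add_right, polar_smul_right, polar_sub_right,
    polar_self, polar_comm Q y x, apply_smul_add_of_hyperbolic hx hy hxy, hx, hy, hxy, hxz, hyz]
  module

end HyperbolicPair

end CliffordAlgebra

namespace pairQ

open QuadraticMap CliffordAlgebra

variable {F : Type*} [Field F] {N : ℕ}

theorem apply (v : (Fin N → F) × (Fin N → F)) : pairQ F N v = ∑ i, v.1 i * v.2 i := by
  simp [pairQ, pairForm, LinearMap.BilinMap.toQuadraticMap_apply]

theorem polar_apply (v w : (Fin N → F) × (Fin N → F)) :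
    polar (pairQ F N) v w = ∑ i, (v.1 i * w.2 i + w.1 i * v.2 i) := by
  simp only [polar, apply, Prod.fst_add, Prod.snd_add, Pi.add_apply, ← Finset.sum_sub_distrib]
  exact Finset.sum_congr rfl fun i _ => by ring

theorem apply_single_fst (k : Fin N) : pairQ F N (Pi.single k 1, 0) = 0 := by
  simp [apply]

theorem apply_single_snd (k : Fin N) : pairQ F N (0, Pi.single k 1) = 0 := by
  simp [apply]

theorem polar_single_fst_single_snd (j k : Fin N) :
    polar (pairQ F N) (Pi.single j 1, 0) (0, Pi.single k 1) = if j = k then 1 else 0 := by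
  simp [polar_apply, Pi.single_apply, eq_comm]

theorem polar_single_fst_single_snd_self (k : Fin N) :
    polar (pairQ F N) (Pi.single k 1, 0) (0, Pi.single k 1) = 1 := by
  simp [polar_single_fst_single_snd]

theorem polar_single_fst_single_fst (j k : Fin N) :
    polar (pairQ F N) (Pi.single j 1, 0) (Pi.single k 1, 0) = 0 := by
  simp [polar_apply]

theorem polar_single_snd_single_snd (j k : Fin N) :
    polar (pairQ F N) (0, Pi.single j 1) (0, Pi.single k 1) = 0 := by
  simp [polar_apply]

theorem hyperbolicRotor_mul_ι_single_fst_mul_star (a b : F) (j k : Fin N) :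
    hyperbolicRotor (pairQ F N) (Pi.single j 1, 0) (0, Pi.single j 1) a b *
        ι (pairQ F N) (Pi.single k 1, 0) *
        star (hyperbolicRotor (pairQ F N) (Pi.single j 1, 0) (0, Pi.single j 1) a b) =
      (if j = k then a ^ 2 else a * b) • ι (pairQ F N) (Pi.single k 1, 0) := by
  split_ifs with hjk
  · subst hjk
    exact hyperbolicRotor_mul_ι_left_mul_star (apply_single_fst j) (apply_single_snd j)
      (polar_single_fst_single_snd_self j) a b
  · refine hyperbolicRotor_mul_ι_mul_star_of_polar_eq_zero (apply_single_fst j)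
      (apply_single_snd j) (polar_single_fst_single_snd_self j)
      (polar_single_fst_single_fst j k) ?_ a b
    rw [polar_comm, polar_single_fst_single_snd, if_neg (Ne.symm hjk)]

theorem hyperbolicRotor_mul_ι_single_snd_mul_star (a b : F) (j k : Fin N) :
    hyperbolicRotor (pairQ F N) (Pi.single j 1, 0) (0, Pi.single j 1) a b *
        ι (pairQ F N) (0, Pi.single k 1) *
        star (hyperbolicRotor (pairQ F N) (Pi.single j 1, 0) (0, Pi.single j 1) a b) =
      (if j = k then b ^ 2 else a * b) • ι (pairQ F N) (0, Pi.single k 1) := by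
  split_ifs with hjk
  · subst hjk
    exact hyperbolicRotor_mul_ι_right_mul_star (apply_single_fst j) (apply_single_snd j)
      (polar_single_fst_single_snd_self j) a b
  · refine hyperbolicRotor_mul_ι_mul_star_of_polar_eq_zero (apply_single_fst j)
      (apply_single_snd j) (polar_single_fst_single_snd_self j) ?_
      (polar_single_snd_single_snd j k) a b
    rw [polar_single_fst_single_snd, if_neg hjk]

end pairQ

open CliffordAlgebra pairQ

theorem stmt_6_general (F : Type*) [Field F] (n : ℕ)
    (lam : F) (hlam : lam ≠ 0)
    (g : CliffordAlgebra (pairQ F (2 * n)))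
    (hg : g = ((List.finRange (2 * n)).map (fun k =>
        algebraMap F (CliffordAlgebra (pairQ F (2 * n))) lam⁻¹ +
          (lam - lam⁻¹) •
            (CliffordAlgebra.ι (pairQ F (2 * n)) (Pi.single k 1, 0) *
              CliffordAlgebra.ι (pairQ F (2 * n)) (0, Pi.single k 1)))).prod) :
    g ∈ spinGroup (pairQ F (2 * n)) ∧
    g ∈ CliffordAlgebra.evenOdd (pairQ F (2 * n)) 0 ∧
    g * star g = 1 ∧
    (∀ v : (Fin (2 * n) → F) × (Fin (2 * n) → F),
      ∃ w : (Fin (2 * n) → F) × (Fin (2 * n) → F),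
        g * CliffordAlgebra.ι (pairQ F (2 * n)) v * star g =
          CliffordAlgebra.ι (pairQ F (2 * n)) w) ∧
    (∀ k : Fin (2 * n),
      g * CliffordAlgebra.ι (pairQ F (2 * n)) (Pi.single k 1, 0) * star g =
        (lam ^ 2) • CliffordAlgebra.ι (pairQ F (2 * n)) (Pi.single k 1, 0)) ∧
    (∀ k : Fin (2 * n),
      g * CliffordAlgebra.ι (pairQ F (2 * n)) (0, Pi.single k 1) * star g =
        (lam ^ 2)⁻¹ • CliffordAlgebra.ι (pairQ F (2 * n)) (0, Pi.single k 1)) := by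
  set rotor : Fin (2 * n) → CliffordAlgebra (pairQ F (2 * n)) := fun k =>
    hyperbolicRotor (pairQ F (2 * n)) (Pi.single k 1, 0) (0, Pi.single k 1) lam lam⁻¹
  replace hg : g = ((List.finRange (2 * n)).map rotor).prod := by
    simp only [hg, rotor, hyperbolicRotor_eq (apply_single_fst _) (apply_single_snd _)
      (polar_single_fst_single_snd_self _)]
  have hspin : g ∈ spinGroup (pairQ F (2 * n)) :=
    hg ▸ Submonoid.list_prod_mem _ (List.forall_mem_map.2 fun k _ =>
      hyperbolicRotor_mem_spinGroup (apply_single_fst k) (apply_single_snd k)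
        (polar_single_fst_single_snd_self k) (mul_inv_cancel₀ hlam))
  have hprod (k : Fin (2 * n)) (c : F) :
      ((List.finRange (2 * n)).map fun j => if j = k then c else lam * lam⁻¹).prod = c := by
    rw [← Fin.prod_univ_def, mul_inv_cancel₀ hlam, Finset.prod_ite_eq', if_pos (Finset.mem_univ k)]
  refine ⟨hspin, even_toSubmodule (pairQ F (2 * n)) ▸ spinGroup.mem_even hspin,
    spinGroup.mul_star_self_of_mem hspin, fun v => ?_, fun k => ?_, fun k => ?_⟩
  · obtain ⟨w, hw⟩ := list_prod_mul_ι_mul_star_mem_range (l := (List.finRange (2 * n)).map rotor)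
      (List.forall_mem_map.2 fun k _ => hyperbolicRotor_mul_ι_mul_star_mem_range _ _ _ _) v
    exact ⟨w, hg ▸ hw.symm⟩
  · rw [hg, list_prod_map_mul_mul_star_eq_smul _ _ _
      fun j _ => hyperbolicRotor_mul_ι_single_fst_mul_star lam lam⁻¹ j k, hprod]
  · rw [hg, list_prod_map_mul_mul_star_eq_smul _ _ _
      fun j _ => hyperbolicRotor_mul_ι_single_snd_mul_star lam lam⁻¹ j k, hprod, inv_pow]

/-- For `λ ∈ F^×` the element
`g = ∏_{k=1}^{2n} (λ⁻¹ + (λ − λ⁻¹)·eₖ·e_{2n+k})` lies in the spin group of `Q`: it is even,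
unitary (`g·star g = 1`), its conjugation preserves the image of `V`; and it acts on vectors by
`g·eₖ·star g = λ²·eₖ` and `g·e_{2n+k}·star g = λ⁻²·e_{2n+k}`. -/
theorem stmt_6 (F : Type*) [Field F] (n : ℕ) (hn : 1 ≤ n)
    (lam : F) (hlam : lam ≠ 0)
    (g : CliffordAlgebra (pairQ F (2 * n)))
    (hg : g = ((List.finRange (2 * n)).map (fun k =>
        algebraMap F (CliffordAlgebra (pairQ F (2 * n))) lam⁻¹ +
          (lam - lam⁻¹) •
            (CliffordAlgebra.ι (pairQ F (2 * n)) (Pi.single k 1, 0) *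
              CliffordAlgebra.ι (pairQ F (2 * n)) (0, Pi.single k 1)))).prod) :
    g ∈ spinGroup (pairQ F (2 * n)) ∧
    g ∈ CliffordAlgebra.evenOdd (pairQ F (2 * n)) 0 ∧
    g * star g = 1 ∧
    (∀ v : (Fin (2 * n) → F) × (Fin (2 * n) → F),
      ∃ w : (Fin (2 * n) → F) × (Fin (2 * n) → F),
        g * CliffordAlgebra.ι (pairQ F (2 * n)) v * star g =
          CliffordAlgebra.ι (pairQ F (2 * n)) w) ∧
    (∀ k : Fin (2 * n),
      g * CliffordAlgebra.ι (pairQ F (2 * n)) (Pi.single k 1, 0) * star g =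
        (lam ^ 2) • CliffordAlgebra.ι (pairQ F (2 * n)) (Pi.single k 1, 0)) ∧
    (∀ k : Fin (2 * n),
      g * CliffordAlgebra.ι (pairQ F (2 * n)) (0, Pi.single k 1) * star g =
        (lam ^ 2)⁻¹ • CliffordAlgebra.ι (pairQ F (2 * n)) (0, Pi.single k 1)) :=
  stmt_6_general F n lam hlam g hg
end

section
/- Let V be a ℚ-vector space of dimension 4n (n ≥ 1) with a nondegenerate symmetric bilinear form B whose extension to V ⊗ ℝ has signature (2n, 2n), i.e. some ℝ-basis of V ⊗ ℝ has B-Gram matrix diag(1,…,1,−1,…,−1) with 2n entries of each sign. Let f : V → V be ℚ-linear with f∘f = −d·id and B(f(x), y) = −B(x, f(y)), and define H(x,y) := d·B(x,y) + √−d·B(f(x), y) with values in K. Then H has signature (n,n): there exist v₁,…,v_{2n} ∈ V such that v₁,…,v_{2n}, f(v₁),…,f(v_{2n}) is a ℚ-basis of V, H(vᵢ, vⱼ) = 0 for all i ≠ j, and exactly n of the rational numbers H(vᵢ, vᵢ) = d·B(vᵢ,vᵢ) are positive and exactly n are negative. -/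
/-!
For symmetric `B` and `f` skew-adjoint with `f ∘ f = -d`, one has `B (f x) x = 0` and
`B (f x) (f y) = d * B x y`. Hence for every anisotropic `v` the plane spanned by `v, f v` is
`f`-stable and `B`-nondegenerate, with orthogonal basis `v, f v` whose squares `B v v` and
`d * B v v` have the same sign. Splitting off such planes one at a time gives `v₁, …, v_{2n}` such
that `vᵢ, f vᵢ` is a `B`-orthogonal basis; orthogonality for both `B` and `B (f ·) ·` is exactly
`H`-orthogonality. Each positive `B vᵢ vᵢ` contributes two positive squares to this basis, so
Sylvester's law of inertia over `ℝ`, against the signature `(2n, 2n)`, forces exactly `n` of them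
to be positive and `n` negative.
-/

open Module Submodule QuadraticMap TensorProduct

namespace Fin

variable {𝕜 : Type*} [Field 𝕜] [LinearOrder 𝕜] [IsStrictOrderedRing 𝕜]

theorem ncard_setOf_val_lt (m p : ℕ) : {j : Fin m | (j : ℕ) < p}.ncard = min m p := by
  rw [← Fin.card_filter_val_lt, ← Set.ncard_coe_finset, Finset.coe_filter_univ]

theorem ncard_setOf_pos_ite (m p : ℕ) :
    {j : Fin m | 0 < if (j : ℕ) < p then (1 : 𝕜) else -1}.ncard = min m p := by
  rw [← ncard_setOf_val_lt]
  congr 1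
  ext j
  by_cases h : (j : ℕ) < p <;> simp [h]

theorem ncard_setOf_ite_neg (m p : ℕ) :
    {j : Fin m | (if (j : ℕ) < p then (1 : 𝕜) else -1) < 0}.ncard = m - min m p := by
  have h := Set.ncard_compl {j : Fin m | (j : ℕ) < p}
  rw [Nat.card_fin, ncard_setOf_val_lt] at h
  rw [← h]
  congr 1
  ext j
  by_cases h : (j : ℕ) < p <;> simp [h]

end Fin

namespace LinearMap.BilinForm

section General

variable {R A M ι : Type*} [CommSemiring R] [CommSemiring A] [Algebra R A] [AddCommMonoid M]
  [Module R M] {B : LinearMap.BilinForm R M}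

theorem iIsOrtho_fin_cons {m : ℕ} {x : M} {v : Fin m → M} (hv : B.iIsOrtho v)
    (hx : ∀ j, B x (v j) = 0 ∧ B (v j) x = 0) : B.iIsOrtho (Fin.cons x v : Fin (m + 1) → M) := by
  intro i j hij
  cases i using Fin.cases <;> cases j using Fin.cases
  · exact absurd rfl hij
  · exact (hx _).1
  · exact (hx _).2
  · exact hv fun h => hij (congrArg _ h)

theorem baseChange_basis_apply (b : Basis ι R M) (i j : ι) :
    B.baseChange A (b.baseChange A i) (b.baseChange A j) = algebraMap R A (B (b i) (b j)) := by
  simp [Basis.baseChange_apply, Algebra.algebraMap_eq_smul_one]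

theorem iIsOrtho_baseChange {b : Basis ι R M} (hb : B.iIsOrtho b) :
    (B.baseChange A).iIsOrtho (b.baseChange A) :=
  iIsOrtho_def.2 fun i j hij => by rw [baseChange_basis_apply, iIsOrtho_def.1 hb i j hij, map_zero]

end General

section SkewAdjoint

variable {k V ι : Type*} [Field k] [AddCommGroup V] [Module k V] {B : LinearMap.BilinForm k V}
  {f : V →ₗ[k] V} {d : k}

theorem apply_apply_self_eq_zero [NeZero (2 : k)] (hB : B.IsSymm)
    (hskew : ∀ x y, B (f x) y = -B x (f y)) (x : V) : B (f x) x = 0 := by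
  have h := hskew x x
  rw [hB.eq x (f x)] at h
  rwa [eq_neg_iff_add_eq_zero, ← two_mul, mul_eq_zero, or_iff_right two_ne_zero] at h

theorem apply_map_map (hf : ∀ x, f (f x) = -(d • x)) (hskew : ∀ x y, B (f x) y = -B x (f y))
    (x y : V) : B (f x) (f y) = d * B x y := by
  rw [hskew, hf, map_neg, map_smul, smul_eq_mul, neg_neg]

theorem exists_apply_self_ne_zero [NeZero (2 : k)] [Nontrivial V] (hB : B.IsSymm)
    (hBnd : B.Nondegenerate) : ∃ x, B x x ≠ 0 := by
  have : Invertible (2 : k) := invertibleOfNonzero two_ne_zero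
  refine exists_bilinForm_self_ne_zero (fun hB0 => ?_) (isSymm_iff.1 hB)
  obtain ⟨x, hx⟩ := exists_ne (0 : V)
  exact hx (hBnd.1 x fun y => by simp [hB0])

theorem nondegenerate_restrict_orthogonal [FiniteDimensional k V] (hB : B.IsRefl)
    (hBnd : B.Nondegenerate) {U : Submodule k V} (hU : (B.restrict U).Nondegenerate) :
    (B.restrict (B.orthogonal U)).Nondegenerate := by
  refine nondegenerate_restrict_of_disjoint_orthogonal _ hB ?_
  rw [orthogonal_orthogonal hBnd hB]
  exact (isCompl_orthogonal_of_restrict_nondegenerate hB hU).symm.disjoint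

theorem nondegenerate_restrict_span_of_iIsOrtho {w : ι → V} (ho : B.iIsOrtho w)
    (hw : ∀ i, B (w i) (w i) ≠ 0) : (B.restrict (span k (Set.range w))).Nondegenerate := by
  set b := Basis.span (linearIndependent_of_iIsOrtho ho hw)
  refine (iIsOrtho.nondegenerate_iff_not_isOrtho_basis_self _ b ?_).2 fun i => ?_
  · refine iIsOrtho_def.2 fun i j hij => ?_
    simpa [b, Basis.span_apply] using iIsOrtho_def.1 ho i j hij
  · simpa [b, Basis.span_apply] using hw i

theorem orthogonal_mem_invtSubmodule (hskew : ∀ x y, B (f x) y = -B x (f y))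
    {U : Submodule k V} (hU : U ∈ End.invtSubmodule f) :
    B.orthogonal U ∈ End.invtSubmodule f := by
  intro x hx u hu
  change B u (f x) = 0
  rw [← neg_eq_zero, ← hskew]
  exact hx (f u) (hU hu)

theorem span_sumElim_mem_invtSubmodule (hf : ∀ x, f (f x) = -(d • x)) (v : ι → V) :
    span k (Set.range (Sum.elim v (f ∘ v))) ∈ End.invtSubmodule f := by
  rw [End.mem_invtSubmodule, span_le]
  rintro _ ⟨i | i, rfl⟩
  · exact subset_span ⟨Sum.inr i, rfl⟩
  · simp only [Sum.elim_inr, Function.comp_apply, SetLike.mem_coe, mem_comap, hf]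
    exact neg_mem (smul_mem _ _ (subset_span ⟨Sum.inl i, rfl⟩))

theorem iIsOrtho_sumElim [NeZero (2 : k)] (hB : B.IsSymm)
    (hf : ∀ x, f (f x) = -(d • x)) (hskew : ∀ x y, B (f x) y = -B x (f y)) {v : ι → V}
    (hv : B.iIsOrtho v) (hfv : (B.compLeft f).iIsOrtho v) :
    B.iIsOrtho (Sum.elim v (f ∘ v)) := by
  have hvfv (i j : ι) : B (v i) (f (v j)) = 0 ∧ B (f (v i)) (v j) = 0 := by
    rcases eq_or_ne i j with rfl | hij
    · rw [hB.eq, and_self, apply_apply_self_eq_zero hB hskew]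
    · have h : B (f (v i)) (v j) = 0 := hfv hij
      exact ⟨by rw [← neg_eq_zero, ← hskew, h], h⟩
  rintro (i | i) (j | j) hij
  · exact hv fun h => hij (congrArg _ h)
  · exact (hvfv i j).1
  · exact (hvfv i j).2
  · change B (f (v i)) (f (v j)) = 0
    rw [apply_map_map hf hskew, hv fun h => hij (congrArg _ h), mul_zero]

theorem apply_sumElim_self_ne_zero (hd : d ≠ 0) (hf : ∀ x, f (f x) = -(d • x))
    (hskew : ∀ x y, B (f x) y = -B x (f y)) {v : ι → V} (hv : ∀ i, B (v i) (v i) ≠ 0) :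
    ∀ k, B (Sum.elim v (f ∘ v) k) (Sum.elim v (f ∘ v) k) ≠ 0 := by
  rintro (i | i)
  · exact hv i
  · simpa [apply_map_map hf hskew] using ⟨hd, hv i⟩

theorem exists_iIsOrtho_compLeft [NeZero (2 : k)] [FiniteDimensional k V] (hd : d ≠ 0)
    (hB : B.IsSymm) (hBnd : B.Nondegenerate) (hf : ∀ x, f (f x) = -(d • x))
    (hskew : ∀ x y, B (f x) y = -B x (f y)) (m : ℕ) (hm : finrank k V = 2 * m) :
    ∃ v : Fin m → V, B.iIsOrtho v ∧ (B.compLeft f).iIsOrtho v ∧ ∀ i, B (v i) (v i) ≠ 0 := by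
  induction m generalizing V with
  | zero => exact ⟨Fin.elim0, fun i => i.elim0, fun i => i.elim0, fun i => i.elim0⟩
  | succ m ih =>
    have : Nontrivial V := (finrank_pos_iff (R := k)).1 (by omega)
    obtain ⟨x, hx⟩ := exists_apply_self_ne_zero hB hBnd
    -- the plane spanned by `x, f x` is the span of the family `Sum.elim _ (f ∘ _)` over `Unit`
    have hPo := iIsOrtho_sumElim hB hf hskew (v := fun _ : Unit => x)
      Subsingleton.pairwise Subsingleton.pairwise
    have hPne := apply_sumElim_self_ne_zero hd hf hskew (v := fun _ : Unit => x) fun _ => hx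
    set U := span k (Set.range (Sum.elim (fun _ : Unit => x) (f ∘ fun _ => x)))
    have hUnd := nondegenerate_restrict_span_of_iIsOrtho hPo hPne
    have hUW := isCompl_orthogonal_of_restrict_nondegenerate hB.isRefl hUnd
    set W := B.orthogonal U
    have hU : U ∈ End.invtSubmodule f := span_sumElim_mem_invtSubmodule hf _
    have hW : W ∈ End.invtSubmodule f := orthogonal_mem_invtSubmodule hskew hU
    have hWdim : finrank k W = 2 * m := by
      have := finrank_add_eq_of_isCompl hUW
      rw [finrank_span_eq_card (linearIndependent_of_iIsOrtho hPo hPne)] at this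
      simp only [Fintype.card_sum, Fintype.card_unique] at this
      omega
    obtain ⟨w, hwo, hwfo, hww⟩ := ih (B := B.restrict W) (f := f.restrict hW) (hB.restrict W)
      (nondegenerate_restrict_orthogonal hB.isRefl hBnd hUnd) (fun y => Subtype.ext (hf y))
      (fun y z => hskew y z) hWdim
    have horth (u : V) (hu : u ∈ U) (y : W) : B u y = 0 ∧ B y u = 0 :=
      ⟨y.2 u hu, hB.isRefl _ _ (y.2 u hu)⟩
    have hxU : x ∈ U := subset_span ⟨Sum.inl (), rfl⟩
    refine ⟨Fin.cons x (W.subtype ∘ w), iIsOrtho_fin_cons hwo fun j => horth x hxU (w j),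
      iIsOrtho_fin_cons hwfo fun j => ⟨(horth (f x) (hU hxU) (w j)).1, ?_⟩, ?_⟩
    · exact (horth x hxU ⟨f (w j), hW (w j).2⟩).2
    · exact Fin.forall_fin_succ.2 ⟨by simpa using hx, by simpa using hww⟩

theorem ncard_pos_sumElim [LinearOrder k] [IsStrictOrderedRing k] (hd : 0 < d)
    (hf : ∀ x, f (f x) = -(d • x)) (hskew : ∀ x y, B (f x) y = -B x (f y)) (v : ι → V) :
    {j | 0 < B (Sum.elim v (f ∘ v) j) (Sum.elim v (f ∘ v) j)}.ncard =
      2 * {i | 0 < B (v i) (v i)}.ncard := by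
  have : {j | 0 < B (Sum.elim v (f ∘ v) j) (Sum.elim v (f ∘ v) j)} =
      Set.sumEquiv.symm ({i | 0 < B (v i) (v i)}, {i | 0 < B (v i) (v i)}) := by
    ext (i | i) <;> simp [apply_map_map hf hskew, mul_pos_iff_of_pos_left hd]
  rw [this, Set.ncard_sumEquiv_symm_apply, two_mul]

theorem ncard_neg_sumElim [LinearOrder k] [IsStrictOrderedRing k] (hd : 0 < d)
    (hf : ∀ x, f (f x) = -(d • x)) (hskew : ∀ x y, B (f x) y = -B x (f y)) (v : ι → V) :
    {j | B (Sum.elim v (f ∘ v) j) (Sum.elim v (f ∘ v) j) < 0}.ncard =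
      2 * {i | B (v i) (v i) < 0}.ncard := by
  have : {j | B (Sum.elim v (f ∘ v) j) (Sum.elim v (f ∘ v) j) < 0} =
      Set.sumEquiv.symm ({i | B (v i) (v i) < 0}, {i | B (v i) (v i) < 0}) := by
    ext (i | i) <;> simp [apply_map_map hf hskew, mul_neg_iff, hd, hd.not_gt]
  rw [this, Set.ncard_sumEquiv_symm_apply, two_mul]

end SkewAdjoint

section Inertia

variable {𝕜 E ι κ : Type*} [Field 𝕜] [LinearOrder 𝕜] [IsStrictOrderedRing 𝕜]
  [AddCommGroup E] [Module 𝕜 E] [Fintype ι] [Fintype κ] {B : LinearMap.BilinForm 𝕜 E}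

theorem equivalent_weightedSumSquares_of_iIsOrtho (hB : B.IsSymm) (b : Basis ι 𝕜 E)
    (hb : B.iIsOrtho b) :
    B.toQuadraticMap.Equivalent (weightedSumSquares 𝕜 fun i => B (b i) (b i)) := by
  have : Invertible (2 : 𝕜) := invertibleOfNonzero two_ne_zero
  rw [← associated_left_inverse 𝕜 hB.eq] at hb
  exact ⟨basisRepr_eq_of_iIsOrtho _ b hb ▸ B.toQuadraticMap.isometryEquivBasisRepr b⟩

theorem ncard_pos_eq_of_iIsOrtho (hB : B.IsSymm) (b : Basis ι 𝕜 E) (c : Basis κ 𝕜 E)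
    (hb : B.iIsOrtho b) (hc : B.iIsOrtho c) :
    {i | 0 < B (b i) (b i)}.ncard = {j | 0 < B (c j) (c j)}.ncard := by
  rw [← QuadraticForm.sigPos_of_equiv_weightedSumSquares
      (equivalent_weightedSumSquares_of_iIsOrtho hB b hb),
    QuadraticForm.sigPos_of_equiv_weightedSumSquares
      (equivalent_weightedSumSquares_of_iIsOrtho hB c hc)]

theorem ncard_neg_eq_of_iIsOrtho (hB : B.IsSymm) (b : Basis ι 𝕜 E) (c : Basis κ 𝕜 E)
    (hb : B.iIsOrtho b) (hc : B.iIsOrtho c) :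
    {i | B (b i) (b i) < 0}.ncard = {j | B (c j) (c j) < 0}.ncard := by
  rw [← QuadraticForm.sigNeg_of_equiv_weightedSumSquares
      (equivalent_weightedSumSquares_of_iIsOrtho hB b hb),
    QuadraticForm.sigNeg_of_equiv_weightedSumSquares
      (equivalent_weightedSumSquares_of_iIsOrtho hB c hc)]

end Inertia

section Rational

variable {𝕜 V ι κ : Type*} [Field 𝕜] [LinearOrder 𝕜] [IsStrictOrderedRing 𝕜] [Algebra ℚ 𝕜]
  [AddCommGroup V] [Module ℚ V] [Fintype ι] [Fintype κ] {B : LinearMap.BilinForm ℚ V}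

theorem ncard_pos_eq_of_iIsOrtho_baseChange (hB : B.IsSymm) (b : Basis ι ℚ V)
    (c : Basis κ 𝕜 (𝕜 ⊗[ℚ] V)) (hb : B.iIsOrtho b) (hc : (B.baseChange 𝕜).iIsOrtho c) :
    {i | 0 < B (b i) (b i)}.ncard = {j | 0 < B.baseChange 𝕜 (c j) (c j)}.ncard := by
  have hB' : (B.baseChange 𝕜).IsSymm := isSymm_iff.2 (IsSymm.baseChange 𝕜 (isSymm_iff.1 hB))
  rw [← ncard_pos_eq_of_iIsOrtho hB' _ c (iIsOrtho_baseChange hb) hc]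
  simp only [baseChange_basis_apply, eq_ratCast, Rat.cast_pos]

theorem ncard_neg_eq_of_iIsOrtho_baseChange (hB : B.IsSymm) (b : Basis ι ℚ V)
    (c : Basis κ 𝕜 (𝕜 ⊗[ℚ] V)) (hb : B.iIsOrtho b) (hc : (B.baseChange 𝕜).iIsOrtho c) :
    {i | B (b i) (b i) < 0}.ncard = {j | B.baseChange 𝕜 (c j) (c j) < 0}.ncard := by
  have hB' : (B.baseChange 𝕜).IsSymm := isSymm_iff.2 (IsSymm.baseChange 𝕜 (isSymm_iff.1 hB))
  rw [← ncard_neg_eq_of_iIsOrtho hB' _ c (iIsOrtho_baseChange hb) hc]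
  simp only [baseChange_basis_apply, eq_ratCast, Rat.cast_lt_zero]

end Rational

end LinearMap.BilinForm

open LinearMap.BilinForm

theorem stmt_8_general
    (d : ℚ) (hd : 0 < d)
    (K : Type*) [Field K] [Algebra ℚ K]
    (sqd : K)
    (n : ℕ)
    (V : Type*) [AddCommGroup V] [Module ℚ V] [FiniteDimensional ℚ V]
    (hdim : Module.finrank ℚ V = 4 * n)
    (B : LinearMap.BilinForm ℚ V) (hB : ∀ x y, B x y = B y x)
    (hBnd : ∀ x, (∀ y, B x y = 0) → x = 0)
    (bR : Module.Basis (Fin (4 * n)) ℝ (ℝ ⊗[ℚ] V))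
    (hsig : ∀ i j, LinearMap.BilinForm.baseChange ℝ B (bR i) (bR j) =
      if i = j then (if (i : ℕ) < 2 * n then (1 : ℝ) else -1) else 0)
    (f : V →ₗ[ℚ] V)
    (hff : f ∘ₗ f = -(d • (LinearMap.id : V →ₗ[ℚ] V)))
    (hskew : ∀ x y, B (f x) y = - B x (f y))
    (H : V → V → K)
    (hH : ∀ x y, H x y =
      algebraMap ℚ K (d * B x y) + sqd * algebraMap ℚ K (B (f x) y)) :
    ∃ v : Fin (2 * n) → V,
      LinearIndependent ℚ (Sum.elim v (fun i => f (v i))) ∧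
      Submodule.span ℚ (Set.range (Sum.elim v (fun i => f (v i)))) = ⊤ ∧
      (∀ i j, i ≠ j → H (v i) (v j) = 0) ∧
      (∀ i, H (v i) (v i) = algebraMap ℚ K (d * B (v i) (v i))) ∧
      (Finset.univ.filter (fun i => 0 < d * B (v i) (v i))).card = n ∧
      (Finset.univ.filter (fun i => d * B (v i) (v i) < 0)).card = n := by
  have hBs : B.IsSymm := ⟨hB⟩
  have hf (x : V) : f (f x) = -(d • x) := by simpa using LinearMap.congr_fun hff x
  obtain ⟨v, hvo, hfvo, hvv⟩ := exists_iIsOrtho_compLeft hd.ne' hBs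
    (hBs.isRefl.nondegenerate_iff_separatingLeft.2 hBnd) hf hskew (2 * n) (by rw [hdim]; ring)
  have hwo := iIsOrtho_sumElim hBs hf hskew hvo hfvo
  have hli := linearIndependent_of_iIsOrtho hwo (apply_sumElim_self_ne_zero hd.ne' hf hskew hvv)
  have hspan := hli.span_eq_top_of_card_eq_finrank' (by simp [hdim]; ring)
  set w := Basis.mk hli hspan.ge
  have hw : B.iIsOrtho w := by simpa [w] using hwo
  have hbR : (B.baseChange ℝ).iIsOrtho bR := iIsOrtho_def.2 fun i j hij => by rw [hsig, if_neg hij]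
  have hpos := ncard_pos_eq_of_iIsOrtho_baseChange hBs w bR hw hbR
  have hneg := ncard_neg_eq_of_iIsOrtho_baseChange hBs w bR hw hbR
  simp only [w, Basis.coe_mk, ncard_pos_sumElim hd hf hskew, hsig, ↓reduceIte,
    Fin.ncard_setOf_pos_ite] at hpos
  simp only [w, Basis.coe_mk, ncard_neg_sumElim hd hf hskew, hsig, ↓reduceIte,
    Fin.ncard_setOf_ite_neg] at hneg
  refine ⟨v, hli, hspan, fun i j hij => ?_, fun i => ?_, ?_, ?_⟩
  · rw [hH, iIsOrtho_def.1 hvo i j hij, ← compLeft_apply, iIsOrtho_def.1 hfvo i j hij]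
    simp
  · rw [hH, apply_apply_self_eq_zero hBs hskew]
    simp
  · rw [← Set.ncard_coe_finset, Finset.coe_filter_univ]
    simp only [mul_pos_iff_of_pos_left hd]
    omega
  · rw [← Set.ncard_coe_finset, Finset.coe_filter_univ]
    simp only [mul_neg_iff, hd, hd.not_gt, true_and, false_and, or_false]
    omega

/-- If `B` is a nondegenerate symmetric bilinear form on a `4n`-dimensional
`ℚ`-vector space `V`, whose real extension has signature `(2n, 2n)`, and `f` satisfies
`f∘f = −d·id` and `B(f(x),y) = −B(x,f(y))`, then the Hermitian form
`H(x,y) = d·B(x,y) + √−d·B(f(x),y)` has signature `(n,n)`: there are `v₁,…,v_{2n}` such that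
`v₁,…,v_{2n}, f(v₁),…,f(v_{2n})` is a `ℚ`-basis, `H(vᵢ,vⱼ) = 0` for `i ≠ j`, and exactly `n`
of the rational numbers `H(vᵢ,vᵢ) = d·B(vᵢ,vᵢ)` are positive and exactly `n` negative. -/
theorem stmt_8
    (d : ℚ) (hd : 0 < d) (hdsq : ∀ q : ℚ, q ^ 2 ≠ d)
    (K : Type*) [Field K] [Algebra ℚ K]
    (sqd : K) (hsqd : sqd ^ 2 = algebraMap ℚ K (-d))
    (σ : K ≃ₐ[ℚ] K) (hσ : σ sqd = -sqd)
    (n : ℕ) (hn : 1 ≤ n)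
    (V : Type*) [AddCommGroup V] [Module ℚ V] [FiniteDimensional ℚ V]
    (hdim : Module.finrank ℚ V = 4 * n)
    (B : LinearMap.BilinForm ℚ V) (hB : ∀ x y, B x y = B y x)
    (hBnd : ∀ x, (∀ y, B x y = 0) → x = 0)
    (bR : Module.Basis (Fin (4 * n)) ℝ (ℝ ⊗[ℚ] V))
    (hsig : ∀ i j, LinearMap.BilinForm.baseChange ℝ B (bR i) (bR j) =
      if i = j then (if (i : ℕ) < 2 * n then (1 : ℝ) else -1) else 0)
    (f : V →ₗ[ℚ] V)
    (hff : f ∘ₗ f = -(d • (LinearMap.id : V →ₗ[ℚ] V)))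
    (hskew : ∀ x y, B (f x) y = - B x (f y))
    (H : V → V → K)
    (hH : ∀ x y, H x y =
      algebraMap ℚ K (d * B x y) + sqd * algebraMap ℚ K (B (f x) y)) :
    ∃ v : Fin (2 * n) → V,
      LinearIndependent ℚ (Sum.elim v (fun i => f (v i))) ∧
      Submodule.span ℚ (Set.range (Sum.elim v (fun i => f (v i)))) = ⊤ ∧
      (∀ i j, i ≠ j → H (v i) (v j) = 0) ∧
      (∀ i, H (v i) (v i) = algebraMap ℚ K (d * B (v i) (v i))) ∧
      (Finset.univ.filter (fun i => 0 < d * B (v i) (v i))).card = n ∧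
      (Finset.univ.filter (fun i => d * B (v i) (v i) < 0)).card = n :=
  stmt_8_general d hd K sqd n V hdim B hB hBnd bR hsig f hff hskew H hH
end

section
/- Let U be a ℚ-vector space of dimension 2n (n ≥ 1), and θ : U* → U a ℚ-linear isomorphism with ξ(θ(η)) = −η(θ(ξ)) for all ξ, η ∈ U*. On V := U ⊕ U* define B((u,ξ),(u',ξ')) := ξ(u') + ξ'(u), f(u,ξ) := (d·θ(ξ), −θ⁻¹(u)), and H(x,y) := d·B(x,y) + √−d·B(f(x), y) ∈ K. Then for every ℚ-basis ξ₁,…,ξ_{2n} of U*, the determinant of the 2n×2n matrix over K with entries H((0,ξᵢ),(0,ξⱼ)) equals (−1)ⁿ·d^{3n}·det[ξⱼ(θ(ξᵢ))], and there exists μ ∈ K^× such that this determinant equals (−1)ⁿ·Nm(μ). (Thus the discriminant of the Hermitian form H in ℚ^×/Nm(K^×) is (−1)ⁿ.) -/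
/-!
On `0 ⊕ U*` the form is `H((0,ξ),(0,η)) = √−d · d · η(θ ξ)`, so its Gram matrix is `√−d · d`
times the rational matrix `A = [ξⱼ(θ ξᵢ)]`. Since `(√−d)² = −d`, this gives the determinant
formula. The antisymmetry of `θ` makes `A` skew-symmetric, so `det A = r²` is a square (by
induction on the size, splitting off an invertible `2 × 2` block and passing to its Schur
complement), and `r ≠ 0` because `θ` is an isomorphism. As `Nm(√−d) = d`, the element
`μ = (√−d)ⁿ · dⁿ · r` has `Nm(μ) = d³ⁿ r²`.
-/

lemma Fin.exists_perm_apply_zero_apply_one {k : ℕ} {i j : Fin (k + 2)} (hij : i ≠ j) :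
    ∃ ρ : Equiv.Perm (Fin (k + 2)), ρ 0 = i ∧ ρ 1 = j := by
  refine ⟨(Equiv.swap 1 (Equiv.swap 0 i j)).trans (Equiv.swap 0 i), ?_, ?_⟩
  · have : Equiv.swap 0 i j ≠ 0 := by
      rw [Ne, Equiv.swap_apply_eq_iff, Equiv.swap_apply_left]; exact hij.symm
    simp [Equiv.swap_apply_of_ne_of_ne Fin.zero_ne_one this.symm]
  · simp

namespace Matrix

lemma transpose_schur_complement_eq_neg {m n R : Type*} [Fintype m] [DecidableEq m] [CommRing R]
    {W : Matrix m m R} {X : Matrix m n R} {Y : Matrix n m R} {Z : Matrix n n R}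
    (hWu : IsUnit W.det) (h : (fromBlocks W X Y Z)ᵀ = -fromBlocks W X Y Z) :
    (Z - Y * W⁻¹ * X)ᵀ = -(Z - Y * W⁻¹ * X) := by
  rw [fromBlocks_transpose, fromBlocks_neg, fromBlocks_inj] at h
  obtain ⟨hW, hY, hX, hZ⟩ := h
  have hWinv : (-W)⁻¹ = -W⁻¹ := inv_eq_right_inv (by rw [neg_mul_neg, mul_nonsing_inv _ hWu])
  rw [transpose_sub, transpose_mul, transpose_mul, transpose_nonsing_inv, hW, hX, hY, hZ, hWinv]
  simp only [Matrix.neg_mul, Matrix.mul_neg, neg_neg, Matrix.mul_assoc]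
  abel

variable {F : Type*} [Field F] [NeZero (2 : F)]

lemma apply_self_eq_zero_of_transpose_eq_neg {ι : Type*} {A : Matrix ι ι F}
    (hA : Aᵀ = -A) (i : ι) : A i i = 0 := by
  have h : A i i = -A i i := congrFun (congrFun hA i) i
  rw [eq_neg_iff_add_eq_zero, ← two_mul] at h
  exact (mul_eq_zero.mp h).resolve_left two_ne_zero

lemma det_fin_two_of_transpose_eq_neg {W : Matrix (Fin 2) (Fin 2) F}
    (hW : Wᵀ = -W) : W.det = W 0 1 * W 0 1 := by
  have h10 : W 1 0 = -W 0 1 := congrFun (congrFun hW 0) 1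
  rw [det_fin_two, apply_self_eq_zero_of_transpose_eq_neg hW, h10]
  ring

lemma isSquare_det_fromBlocks_of_transpose_eq_neg {ι : Type*} [Fintype ι] [DecidableEq ι]
    {W : Matrix (Fin 2) (Fin 2) F} {X : Matrix (Fin 2) ι F} {Y : Matrix ι (Fin 2) F}
    {Z : Matrix ι ι F} (h : (fromBlocks W X Y Z)ᵀ = -fromBlocks W X Y Z) (hW : W 0 1 ≠ 0)
    (hschur : ∀ M : Matrix ι ι F, Mᵀ = -M → IsSquare M.det) :
    IsSquare (fromBlocks W X Y Z).det := by
  have hWskew : Wᵀ = -W := by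
    rw [fromBlocks_transpose, fromBlocks_neg, fromBlocks_inj] at h
    exact h.1
  have hWdet : W.det = W 0 1 * W 0 1 := det_fin_two_of_transpose_eq_neg hWskew
  have hWu : IsUnit W.det := by rw [hWdet]; exact (mul_ne_zero hW hW).isUnit
  have : Invertible W := W.invertibleOfIsUnitDet hWu
  obtain ⟨r, hr⟩ := hschur _ (transpose_schur_complement_eq_neg hWu h)
  refine ⟨W 0 1 * r, ?_⟩
  rw [det_fromBlocks₁₁, invOf_eq_nonsing_inv, hWdet, hr]
  ring

theorem isSquare_det_of_transpose_eq_neg {m : ℕ} (A : Matrix (Fin m) (Fin m) F) (hA : Aᵀ = -A) :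
    IsSquare A.det := by
  induction m using Nat.twoStepInduction with
  | zero => exact ⟨1, by simp⟩
  | one => exact ⟨0, by simp [apply_self_eq_zero_of_transpose_eq_neg hA]⟩
  | more k ih _ =>
    by_cases hzero : A = 0
    · exact ⟨0, by simp [hzero]⟩
    obtain ⟨i, j, hij⟩ : ∃ i j, A i j ≠ 0 := by
      by_contra! h; exact hzero (ext h)
    have hne : i ≠ j := by rintro rfl; exact hij (apply_self_eq_zero_of_transpose_eq_neg hA i)
    obtain ⟨ρ, hρ0, hρ1⟩ := Fin.exists_perm_apply_zero_apply_one hne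
    let e : Fin 2 ⊕ Fin k ≃ Fin (k + 2) := finSumFinEquiv.trans (finCongr (add_comm 2 k))
    let N := A.submatrix (e.trans ρ) (e.trans ρ)
    have hN : Nᵀ = -N := by rw [transpose_submatrix, hA]; rfl
    rw [← det_submatrix_equiv_self (e.trans ρ)]
    change IsSquare N.det
    rw [← fromBlocks_toBlocks N]
    refine isSquare_det_fromBlocks_of_transpose_eq_neg ?_ ?_ ih
    · rwa [fromBlocks_toBlocks]
    · have he0 : e (Sum.inl 0) = 0 := rfl
      have he1 : e (Sum.inl 1) = 1 := rfl
      change A (ρ (e (.inl 0))) (ρ (e (.inl 1))) ≠ 0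
      rwa [he0, he1, hρ0, hρ1]

end Matrix

theorem LinearEquiv.det_dual_apply_ne_zero {k V ι : Type*} [Field k] [AddCommGroup V] [Module k V]
    [Fintype ι] [DecidableEq ι] (θ : Module.Dual k V ≃ₗ[k] V)
    (ξ : Module.Basis ι k (Module.Dual k V)) :
    (Matrix.of fun i j => ξ j (θ (ξ i))).det ≠ 0 := by
  let β : LinearMap.BilinForm k (Module.Dual k V) := (Module.Dual.eval k V).comp θ.toLinearMap
  have hβ : LinearMap.toMatrix₂ ξ ξ β = Matrix.of fun i j => ξ j (θ (ξ i)) := by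
    ext i j; simp [β]
  rw [← hβ, ← LinearMap.separatingLeft_iff_det_ne_zero]
  intro η hη
  rw [← θ.map_eq_zero_iff, ← Module.forall_dual_apply_eq_zero_iff k]
  exact hη

theorem mul_algEquiv_apply_pow_mul_algebraMap {R A : Type*} [CommRing R] [CommRing A]
    [Algebra R A] {d : R} {s : A} (hs : s ^ 2 = algebraMap R A (-d)) (σ : A ≃ₐ[R] A) (hσ : σ s = -s)
    (n : ℕ) (q : R) :
    s ^ n * algebraMap R A q * σ (s ^ n * algebraMap R A q) = algebraMap R A (d ^ n * q ^ 2) := by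
  have hnorm : s * σ s = algebraMap R A d := by
    rw [hσ, mul_neg, ← sq, hs, map_neg, neg_neg]
  calc s ^ n * algebraMap R A q * σ (s ^ n * algebraMap R A q)
      = (s * σ s) ^ n * algebraMap R A q ^ 2 := by
        rw [map_mul, map_pow, AlgEquiv.commutes]; ring
    _ = algebraMap R A (d ^ n * q ^ 2) := by rw [hnorm, map_mul, map_pow, map_pow]

theorem stmt_9_general
    (d : ℚ) (hd : 0 < d)
    (K : Type*) [Field K] [Algebra ℚ K]
    (sqd : K) (hsqd : sqd ^ 2 = algebraMap ℚ K (-d))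
    (σ : K ≃ₐ[ℚ] K) (hσ : σ sqd = -sqd)
    (n : ℕ)
    (U : Type*) [AddCommGroup U] [Module ℚ U]
    (θ : Module.Dual ℚ U ≃ₗ[ℚ] U)
    (hθ : ∀ ξ η : Module.Dual ℚ U, ξ (θ η) = - η (θ ξ))
    (B : (U × Module.Dual ℚ U) → (U × Module.Dual ℚ U) → ℚ)
    (hB : ∀ x y, B x y = x.2 y.1 + y.2 x.1)
    (f : (U × Module.Dual ℚ U) → (U × Module.Dual ℚ U))
    (hf : ∀ x, f x = (d • θ x.2, - θ.symm x.1))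
    (H : (U × Module.Dual ℚ U) → (U × Module.Dual ℚ U) → K)
    (hH : ∀ x y, H x y =
      algebraMap ℚ K (d * B x y) + sqd * algebraMap ℚ K (B (f x) y)) :
    ∀ ξ : Module.Basis (Fin (2 * n)) ℚ (Module.Dual ℚ U),
      (Matrix.det (Matrix.of fun i j => H ((0 : U), ξ i) ((0 : U), ξ j)) =
        algebraMap ℚ K ((-1) ^ n * d ^ (3 * n) *
          Matrix.det (Matrix.of fun i j => (ξ j) (θ (ξ i))))) ∧
      ∃ μ : K, μ ≠ 0 ∧
        Matrix.det (Matrix.of fun i j => H ((0 : U), ξ i) ((0 : U), ξ j)) =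
          algebraMap ℚ K ((-1) ^ n) * (μ * σ μ) := by
  intro ξ
  set A : Matrix (Fin (2 * n)) (Fin (2 * n)) ℚ := Matrix.of fun i j => ξ j (θ (ξ i))
  have hgram : (Matrix.of fun i j => H ((0 : U), ξ i) ((0 : U), ξ j)) =
      (sqd * algebraMap ℚ K d) • A.map (algebraMap ℚ K) := by
    ext i j
    simp [hH, hB, hf, A, map_mul, mul_assoc]
  have hdet : (Matrix.of fun i j => H ((0 : U), ξ i) ((0 : U), ξ j)).det =
      algebraMap ℚ K ((-1) ^ n * d ^ (3 * n) * A.det) := by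
    have hmap : (A.map (algebraMap ℚ K)).det = algebraMap ℚ K A.det :=
      ((algebraMap ℚ K).map_det A).symm
    rw [hgram, Matrix.det_smul, Fintype.card_fin, hmap, mul_pow, pow_mul, hsqd]
    simp only [map_mul, map_pow, map_neg, map_one]
    ring
  refine ⟨hdet, ?_⟩
  obtain ⟨r, hr⟩ := Matrix.isSquare_det_of_transpose_eq_neg A (by ext i j; exact hθ (ξ i) (ξ j))
  have hr0 : r ≠ 0 := by
    rintro rfl
    exact θ.det_dual_apply_ne_zero ξ (by rw [hr, mul_zero])
  have hsqd0 : sqd ≠ 0 := by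
    rintro rfl
    rw [zero_pow two_ne_zero, eq_comm, map_eq_zero, neg_eq_zero] at hsqd
    exact hd.ne' hsqd
  refine ⟨sqd ^ n * algebraMap ℚ K (d ^ n * r), ?_, ?_⟩
  · exact mul_ne_zero (pow_ne_zero n hsqd0)
      ((map_ne_zero _).mpr (mul_ne_zero (pow_ne_zero n hd.ne') hr0))
  · rw [hdet, mul_algEquiv_apply_pow_mul_algebraMap hsqd σ hσ, hr, ← map_mul]
    ring_nf

/-- For `U` of dimension `2n` over `ℚ` and an antisymmetric isomorphism
`θ : U* → U`, the Hermitian form `H` on `V = U ⊕ U*` built from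
`B((u,ξ),(u',ξ')) = ξ(u') + ξ'(u)` and `f(u,ξ) = (d·θ(ξ), −θ⁻¹(u))` has Gram determinant
`(−1)ⁿ·d^{3n}·det[ξⱼ(θ(ξᵢ))]` on `0 ⊕ U*` in any basis `ξ₁,…,ξ_{2n}` of `U*`, and this
determinant equals `(−1)ⁿ·Nm(μ)` for some `μ ∈ K^×`; i.e. the discriminant of `H` is `(−1)ⁿ`. -/
theorem stmt_9
    (d : ℚ) (hd : 0 < d) (hdsq : ∀ q : ℚ, q ^ 2 ≠ d)
    (K : Type*) [Field K] [Algebra ℚ K]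
    (sqd : K) (hsqd : sqd ^ 2 = algebraMap ℚ K (-d))
    (σ : K ≃ₐ[ℚ] K) (hσ : σ sqd = -sqd)
    (n : ℕ) (hn : 1 ≤ n)
    (U : Type*) [AddCommGroup U] [Module ℚ U] [FiniteDimensional ℚ U]
    (hdim : Module.finrank ℚ U = 2 * n)
    (θ : Module.Dual ℚ U ≃ₗ[ℚ] U)
    (hθ : ∀ ξ η : Module.Dual ℚ U, ξ (θ η) = - η (θ ξ))
    (B : (U × Module.Dual ℚ U) → (U × Module.Dual ℚ U) → ℚ)
    (hB : ∀ x y, B x y = x.2 y.1 + y.2 x.1)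
    (f : (U × Module.Dual ℚ U) → (U × Module.Dual ℚ U))
    (hf : ∀ x, f x = (d • θ x.2, - θ.symm x.1))
    (H : (U × Module.Dual ℚ U) → (U × Module.Dual ℚ U) → K)
    (hH : ∀ x y, H x y =
      algebraMap ℚ K (d * B x y) + sqd * algebraMap ℚ K (B (f x) y)) :
    ∀ ξ : Module.Basis (Fin (2 * n)) ℚ (Module.Dual ℚ U),
      (Matrix.det (Matrix.of fun i j => H ((0 : U), ξ i) ((0 : U), ξ j)) =
        algebraMap ℚ K ((-1) ^ n * d ^ (3 * n) *
          Matrix.det (Matrix.of fun i j => (ξ j) (θ (ξ i))))) ∧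
      ∃ μ : K, μ ≠ 0 ∧
        Matrix.det (Matrix.of fun i j => H ((0 : U), ξ i) ((0 : U), ξ j)) =
          algebraMap ℚ K ((-1) ^ n) * (μ * σ μ) :=
  stmt_9_general d hd K sqd hsqd σ hσ n U θ hθ B hB f hf H hH
end

section
/- Let V be a real vector space of dimension 4n (n ≥ 1) with a nondegenerate symmetric bilinear form B, and let d > 0 be a real number. Let f, I : V → V be commuting ℝ-linear maps with f∘f = −d·id, I∘I = −id, B(f(x), y) = −B(x, f(y)), and B(I(x), y) = −B(x, I(y)). In V_ℂ := V ⊗ ℂ let W₁ and W₂ be the (i√d)- and (−i√d)-eigenspaces of (the ℂ-linear extension of) f, and let V^{1,0} and V^{0,1} be the i- and (−i)-eigenspaces of I. Assume that the (√d)-eigenspace of I∘f in V_ℂ has complex dimension 2n. Then each of the four intersections V^{1,0} ∩ W₁, V^{1,0} ∩ W₂, V^{0,1} ∩ W₁, V^{0,1} ∩ W₂ has complex dimension n, and moreover V^{1,0} ∩ W₂ = (V^{1,0} ∩ W₁)^⊥ ∩ W₂, where ⊥ denotes the orthogonal complement in V_ℂ with respect to the ℂ-bilinear extension of B. -/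
/-!
Since `I² = -1` and `f² = -d`, the space `V_ℂ` splits into the four joint eigenspaces
`V^{±} ∩ W_{1,2}` of the commuting operators `I` and `f`. On `V^{1,0}` the operator `I f` acts
as `i f`, so the `√d`-eigenspace of `I f` is `(V^{1,0} ∩ W₂) ⊕ (V^{0,1} ∩ W₁)`, which therefore
has dimension `2n`, and the remaining two pieces span a complement of dimension `2n`. Complex
conjugation of `V_ℂ` exchanges `V^{1,0} ∩ W₁` with `V^{0,1} ∩ W₂` and `V^{1,0} ∩ W₂` with
`V^{0,1} ∩ W₁`, so all four pieces have dimension `n`.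

For the orthogonality, skew-adjointness makes eigenvectors of `I` (or `f`) with eigenvalues
`λ, μ` orthogonal unless `λ + μ = 0`. Hence `V^{1,0}` is isotropic, and a vector of
`(V^{1,0} ∩ W₁)^⊥ ∩ W₂` has a `V^{0,1}`-component orthogonal to
`(V^{1,0} ∩ W₁) + W₂ + V^{0,1} = V_ℂ`, which vanishes by nondegeneracy.
-/

open TensorProduct Module

namespace Module.End

variable {K M : Type*} [Field K] [AddCommGroup M] [Module K M]

lemma eigenspace_inf_sup_eigenspace_neg_inf [CharZero K] {g : End K M} {c : K} (hc : c ≠ 0)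
    (hg : g ^ 2 = c ^ 2 • 1) {p : Submodule K M} (hp : ∀ x ∈ p, g x ∈ p) :
    g.eigenspace c ⊓ p ⊔ g.eigenspace (-c) ⊓ p = p := by
  refine le_antisymm (sup_le inf_le_right inf_le_right) fun x hx => ?_
  have hgg : g (g x) = c ^ 2 • x := by simpa [pow_two] using LinearMap.congr_fun hg x
  refine Submodule.mem_sup.mpr ⟨(2 : K)⁻¹ • (x + c⁻¹ • g x), Submodule.mem_inf.mpr ⟨?_, ?_⟩,
    (2 : K)⁻¹ • (x - c⁻¹ • g x), Submodule.mem_inf.mpr ⟨?_, ?_⟩, ?_⟩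
  · rw [mem_eigenspace_iff, map_smul, map_add, map_smul, hgg]
    match_scalars <;> field_simp
  · exact p.smul_mem _ (p.add_mem hx (p.smul_mem _ (hp x hx)))
  · rw [mem_eigenspace_iff, map_smul, map_sub, map_smul, hgg]
    match_scalars <;> field_simp
  · exact p.smul_mem _ (p.sub_mem hx (p.smul_mem _ (hp x hx)))
  · match_scalars <;> ring

lemma finrank_eigenspace_inf_add_finrank_eigenspace_neg_inf [CharZero K]
    [FiniteDimensional K M] {g : End K M} {c : K} (hc : c ≠ 0) (hg : g ^ 2 = c ^ 2 • 1)
    {p : Submodule K M} (hp : ∀ x ∈ p, g x ∈ p) :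
    finrank K ↥(g.eigenspace c ⊓ p) + finrank K ↥(g.eigenspace (-c) ⊓ p) = finrank K p := by
  have hne : c ≠ -c := by simpa [eq_neg_iff_add_eq_zero] using hc
  rw [← Submodule.finrank_sup_add_finrank_inf_eq,
    ((g.disjoint_genEigenspace hne 1 1).mono inf_le_left inf_le_left).eq_bot, finrank_bot,
    add_zero, eigenspace_inf_sup_eigenspace_neg_inf hc hg hp]

lemma eigenspace_inf_eigenspace_mul {g h : End K M} (hgh : Commute g h) {μ : K} (hμ : μ ≠ 0)
    (e : K) : h.eigenspace μ ⊓ (h * g).eigenspace (μ * e) = h.eigenspace μ ⊓ g.eigenspace e := by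
  ext x
  simp only [Submodule.mem_inf, mem_eigenspace_iff, and_congr_right_iff]
  intro hx
  rw [mul_apply, ← mul_apply, ← hgh.eq, mul_apply, hx, map_smul, mul_smul]
  exact (smul_right_injective M hμ).eq_iff

variable [CharZero K] [FiniteDimensional K M] {g h : End K M} (hgh : Commute g h) {μ : K}
  (hμ : μ ≠ 0) (hh : h ^ 2 = μ ^ 2 • 1)
include hgh hμ hh

lemma finrank_eigenspace_mul (e : K) :
    finrank K ↥((h * g).eigenspace (μ * e)) =
      finrank K ↥(h.eigenspace μ ⊓ g.eigenspace e) +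
        finrank K ↥(h.eigenspace (-μ) ⊓ g.eigenspace (-e)) := by
  have hinv : ∀ x ∈ (h * g).eigenspace (μ * e), h x ∈ (h * g).eigenspace (μ * e) :=
    fun x hx => mapsTo_genEigenspace_of_comm ((Commute.refl h).mul_left hgh) (μ * e) 1 hx
  rw [← finrank_eigenspace_inf_add_finrank_eigenspace_neg_inf hμ hh hinv,
    eigenspace_inf_eigenspace_mul hgh hμ, ← neg_mul_neg μ e,
    eigenspace_inf_eigenspace_mul hgh (neg_ne_zero.mpr hμ)]

lemma finrank_eigenspace_inf_eigenspace_add {e : K} (he : e ≠ 0) (hg : g ^ 2 = e ^ 2 • 1) :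
    finrank K ↥(h.eigenspace μ ⊓ g.eigenspace e) +
        finrank K ↥(h.eigenspace μ ⊓ g.eigenspace (-e)) +
      (finrank K ↥(h.eigenspace (-μ) ⊓ g.eigenspace e) +
        finrank K ↥(h.eigenspace (-μ) ⊓ g.eigenspace (-e))) = finrank K M := by
  have hsplit (ν : K) : finrank K ↥(h.eigenspace ν ⊓ g.eigenspace e) +
      finrank K ↥(h.eigenspace ν ⊓ g.eigenspace (-e)) = finrank K (h.eigenspace ν) := by
    rw [inf_comm, inf_comm (h.eigenspace ν)]
    exact finrank_eigenspace_inf_add_finrank_eigenspace_neg_inf he hg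
      fun x hx => mapsTo_genEigenspace_of_comm hgh.symm ν 1 hx
  rw [hsplit, hsplit, ← finrank_top K M]
  have htop := finrank_eigenspace_inf_add_finrank_eigenspace_neg_inf hμ hh (p := ⊤)
    fun _ _ => trivial
  rwa [inf_top_eq, inf_top_eq] at htop

end Module.End

lemma LinearMap.BilinForm.apply_eq_zero_of_mem_eigenspace {K M : Type*} [Field K]
    [AddCommGroup M] [Module K M] {B : LinearMap.BilinForm K M} {g : End K M}
    (hg : ∀ x y, B (g x) y = -B x (g y)) {c e : K} (hce : c + e ≠ 0) {x y : M}
    (hx : x ∈ g.eigenspace c) (hy : y ∈ g.eigenspace e) : B x y = 0 := by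
  have h := hg x y
  rw [End.mem_eigenspace_iff.mp hx, End.mem_eigenspace_iff.mp hy, LinearMap.BilinForm.smul_left,
    map_smul] at h
  have h' : (c + e) * B x y = 0 := by linear_combination h
  exact (mul_eq_zero.mp h').resolve_left hce

theorem Module.End.eigenspace_inf_eigenspace_neg_eq_orthogonal_inf {K M : Type*} [Field K]
    [CharZero K] [AddCommGroup M] [Module K M] {B : LinearMap.BilinForm K M}
    (hB : B.Nondegenerate) {g h : End K M} (hgh : Commute g h) {μ e : K} (hμ : μ ≠ 0)
    (he : e ≠ 0) (hh : h ^ 2 = μ ^ 2 • 1) (hg : g ^ 2 = e ^ 2 • 1)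
    (hhskew : ∀ x y, B (h x) y = -B x (h y)) (hgskew : ∀ x y, B (g x) y = -B x (g y)) :
    h.eigenspace μ ⊓ g.eigenspace (-e) =
      B.orthogonal (h.eigenspace μ ⊓ g.eigenspace e) ⊓ g.eigenspace (-e) := by
  open LinearMap.BilinForm in
  have hμμ : μ + μ ≠ 0 := by simpa using hμ
  have hnμμ : -μ + -μ ≠ 0 := by simpa using hμ
  have hnee : -e + -e ≠ 0 := by simpa using he
  refine le_antisymm (le_inf (fun x hx => ?_) inf_le_right) fun x hx => ?_
  · exact mem_orthogonal_iff.mpr fun y hy =>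
      apply_eq_zero_of_mem_eigenspace hhskew hμμ hy.1 hx.1
  obtain ⟨hxo, hxg⟩ := Submodule.mem_inf.mp hx
  rw [← eigenspace_inf_sup_eigenspace_neg_inf hμ hh (p := g.eigenspace (-e))
    (fun y hy => mapsTo_genEigenspace_of_comm hgh (-e) 1 hy)] at hxg
  obtain ⟨u, hu, v, hv, rfl⟩ := Submodule.mem_sup.mp hxg
  suffices v = 0 by simpa [this] using hu
  -- `v` is orthogonal to `h_μ ⊓ g_e`, to `g_{-e}` and to `h_{-μ}`, which together span.
  have hvo : v ∈ B.orthogonal (h.eigenspace μ ⊓ g.eigenspace e) := by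
    refine (Submodule.add_mem_iff_right _ ?_).mp hxo
    exact mem_orthogonal_iff.mpr fun y hy =>
      apply_eq_zero_of_mem_eigenspace hhskew hμμ hy.1 hu.1
  have hhμ : h.eigenspace μ ≤ h.eigenspace μ ⊓ g.eigenspace e ⊔ g.eigenspace (-e) :=
    (eigenspace_inf_sup_eigenspace_neg_inf he hg (p := h.eigenspace μ)
      fun y hy => mapsTo_genEigenspace_of_comm hgh.symm μ 1 hy).ge.trans
      (sup_le_sup (inf_comm _ _).le inf_le_left)
  have htop := eigenspace_inf_sup_eigenspace_neg_inf hμ hh (p := ⊤) fun _ _ => trivial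
  rw [inf_top_eq, inf_top_eq] at htop
  suffices ⊤ ≤ LinearMap.ker (B.flip v) from hB.2 v fun w => this trivial
  refine htop ▸ sup_le (hhμ.trans (sup_le (fun y hy => ?_) fun y hy => ?_)) fun y hy => ?_
  · exact mem_orthogonal_iff.mp hvo y hy
  · exact apply_eq_zero_of_mem_eigenspace hgskew hnee hy hv.2
  · exact apply_eq_zero_of_mem_eigenspace hhskew hnμμ hy hv.1

namespace LinearMap

variable {R A M : Type*} [CommRing R] [CommRing A] [Algebra R A] [AddCommGroup M] [Module R M]

lemma baseChange_sq_of_comp_self_eq {g : M →ₗ[R] M} {r : R} (h : g ∘ₗ g = r • id) :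
    g.baseChange A ^ 2 = algebraMap R A r • 1 := by
  rw [pow_two, Module.End.mul_eq_comp, ← baseChange_comp, h, baseChange_smul, baseChange_id,
    algebraMap_smul]
  rfl

lemma commute_baseChange_of_comp_comm {g h : M →ₗ[R] M} (hgh : g ∘ₗ h = h ∘ₗ g) :
    Commute (g.baseChange A) (h.baseChange A) := by
  rw [commute_iff_eq, Module.End.mul_eq_comp, Module.End.mul_eq_comp, ← baseChange_comp,
    ← baseChange_comp, hgh]

namespace BilinForm

lemma skew_baseChange {B : LinearMap.BilinForm R M} {g : M →ₗ[R] M}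
    (hg : ∀ x y, B (g x) y = -B x (g y)) (x y : A ⊗[R] M) :
    B.baseChange A (g.baseChange A x) y = -B.baseChange A x (g.baseChange A y) := by
  induction x using TensorProduct.induction_on with
  | zero => simp
  | add x₁ x₂ h₁ h₂ => simp only [map_add, LinearMap.add_apply, h₁, h₂, neg_add]
  | tmul a v =>
    induction y using TensorProduct.induction_on with
    | zero => simp
    | add y₁ y₂ h₁ h₂ => simp only [map_add, h₁, h₂, neg_add]
    | tmul b w => simp [hg v w]

lemma toMatrix_baseChange {ι : Type*} [Fintype ι] [DecidableEq ι] (B : LinearMap.BilinForm R M)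
    (b : Basis ι R M) :
    toMatrix (b.baseChange A) (B.baseChange A) = (toMatrix b B).map (algebraMap R A) := by
  ext i j
  simp [toMatrix_apply, Basis.baseChange_apply, baseChange_tmul, Algebra.algebraMap_eq_smul_one]

lemma Nondegenerate.baseChange {K L : Type*} [Field K] [Field L] [Algebra K L] [Module K M]
    [FiniteDimensional K M] {B : LinearMap.BilinForm K M} (hB : B.Nondegenerate) :
    (B.baseChange L).Nondegenerate := by
  classical
  let b := Module.finBasis K M
  rw [nondegenerate_iff_det_ne_zero (b.baseChange L), toMatrix_baseChange,
    ← RingHom.mapMatrix_apply, ← RingHom.map_det]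
  exact (map_ne_zero (algebraMap K L)).mpr ((nondegenerate_iff_det_ne_zero b).mp hB)

end BilinForm

end LinearMap

section Complexification

variable (V : Type*) [AddCommGroup V] [Module ℝ V]

noncomputable def complexConj : ℂ ⊗[ℝ] V →ₗ[ℝ] ℂ ⊗[ℝ] V :=
  TensorProduct.map Complex.conjAe.toLinearMap LinearMap.id

variable {V}

lemma complexConj_involutive : Function.Involutive (complexConj V) := fun x => by
  induction x using TensorProduct.induction_on with
  | zero => simp
  | tmul a v => simp [complexConj]
  | add y z hy hz => simp only [map_add, hy, hz]

lemma complexConj_smul (c : ℂ) (x : ℂ ⊗[ℝ] V) :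
    complexConj V (c • x) = star c • complexConj V x := by
  induction x using TensorProduct.induction_on with
  | zero => simp
  | tmul a v => simp [complexConj, smul_tmul', map_mul]
  | add y z hy hz => simp only [smul_add, map_add, hy, hz]

lemma complexConj_baseChange (g : V →ₗ[ℝ] V) (x : ℂ ⊗[ℝ] V) :
    complexConj V (g.baseChange ℂ x) = g.baseChange ℂ (complexConj V x) := by
  induction x using TensorProduct.induction_on with
  | zero => simp
  | tmul a v => simp [complexConj]
  | add y z hy hz => simp only [map_add, hy, hz]

lemma complexConj_mem_eigenspace_baseChange {g : V →ₗ[ℝ] V} {μ : ℂ} {x : ℂ ⊗[ℝ] V}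
    (hx : x ∈ End.eigenspace (g.baseChange ℂ) μ) :
    complexConj V x ∈ End.eigenspace (g.baseChange ℂ) (star μ) := by
  rw [End.mem_eigenspace_iff] at hx ⊢
  rw [← complexConj_baseChange, hx, complexConj_smul]

variable [FiniteDimensional ℝ V]

lemma finrank_le_of_complexConj_mem {U U' : Submodule ℂ (ℂ ⊗[ℝ] V)}
    (h : ∀ x ∈ U, complexConj V x ∈ U') : finrank ℂ U ≤ finrank ℂ U' := by
  have hinj : Function.Injective ((complexConj V).restrict (p := U.restrictScalars ℝ)
      (q := U'.restrictScalars ℝ) h) := fun x y hxy =>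
    Subtype.ext (complexConj_involutive.injective (congrArg Subtype.val hxy))
  have hU : finrank ℝ (U.restrictScalars ℝ) = 2 * finrank ℂ U := finrank_real_of_complex U
  have hU' : finrank ℝ (U'.restrictScalars ℝ) = 2 * finrank ℂ U' := finrank_real_of_complex U'
  have := LinearMap.finrank_le_finrank_of_injective hinj
  omega

lemma finrank_eigenspace_inf_eigenspace_baseChange_star (g h : V →ₗ[ℝ] V) (μ ν : ℂ) :
    finrank ℂ ↥(End.eigenspace (g.baseChange ℂ) (star μ) ⊓
        End.eigenspace (h.baseChange ℂ) (star ν)) =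
      finrank ℂ ↥(End.eigenspace (g.baseChange ℂ) μ ⊓ End.eigenspace (h.baseChange ℂ) ν) := by
  have hconj (μ ν : ℂ) :
      ∀ x ∈ End.eigenspace (g.baseChange ℂ) μ ⊓ End.eigenspace (h.baseChange ℂ) ν,
        complexConj V x ∈
          End.eigenspace (g.baseChange ℂ) (star μ) ⊓ End.eigenspace (h.baseChange ℂ) (star ν) :=
    fun x hx => ⟨complexConj_mem_eigenspace_baseChange hx.1,
      complexConj_mem_eigenspace_baseChange hx.2⟩
  refine le_antisymm ?_ (finrank_le_of_complexConj_mem (hconj μ ν))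
  have := finrank_le_of_complexConj_mem (hconj (star μ) (star ν))
  rwa [star_star, star_star] at this

end Complexification

theorem stmt_10_general (n : ℕ)
    (V : Type*) [AddCommGroup V] [Module ℝ V] [FiniteDimensional ℝ V]
    (hdim : Module.finrank ℝ V = 4 * n)
    (B : LinearMap.BilinForm ℝ V)
    (hBnd : ∀ x, (∀ y, B x y = 0) → x = 0)
    (d : ℝ) (hd : 0 < d)
    (f I : V →ₗ[ℝ] V)
    (hcomm : f ∘ₗ I = I ∘ₗ f)
    (hff : f ∘ₗ f = -(d • (LinearMap.id : V →ₗ[ℝ] V)))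
    (hII : I ∘ₗ I = -(LinearMap.id : V →ₗ[ℝ] V))
    (hfskew : ∀ x y, B (f x) y = - B x (f y))
    (hIskew : ∀ x y, B (I x) y = - B x (I y))
    (hmid : Module.finrank ℂ
      ↥(Module.End.eigenspace (LinearMap.baseChange ℂ (I ∘ₗ f))
          ((Real.sqrt d : ℂ))) = 2 * n) :
    Module.finrank ℂ
      ↥(Module.End.eigenspace (LinearMap.baseChange ℂ I) Complex.I ⊓
        Module.End.eigenspace (LinearMap.baseChange ℂ f)
          ((Real.sqrt d : ℂ) * Complex.I)) = n ∧
    Module.finrank ℂ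
      ↥(Module.End.eigenspace (LinearMap.baseChange ℂ I) Complex.I ⊓
        Module.End.eigenspace (LinearMap.baseChange ℂ f)
          (-((Real.sqrt d : ℂ) * Complex.I))) = n ∧
    Module.finrank ℂ
      ↥(Module.End.eigenspace (LinearMap.baseChange ℂ I) (-Complex.I) ⊓
        Module.End.eigenspace (LinearMap.baseChange ℂ f)
          ((Real.sqrt d : ℂ) * Complex.I)) = n ∧
    Module.finrank ℂ
      ↥(Module.End.eigenspace (LinearMap.baseChange ℂ I) (-Complex.I) ⊓
        Module.End.eigenspace (LinearMap.baseChange ℂ f)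
          (-((Real.sqrt d : ℂ) * Complex.I))) = n ∧
    Module.End.eigenspace (LinearMap.baseChange ℂ I) Complex.I ⊓
        Module.End.eigenspace (LinearMap.baseChange ℂ f)
          (-((Real.sqrt d : ℂ) * Complex.I)) =
      LinearMap.BilinForm.orthogonal (LinearMap.BilinForm.baseChange ℂ B)
          (Module.End.eigenspace (LinearMap.baseChange ℂ I) Complex.I ⊓
            Module.End.eigenspace (LinearMap.baseChange ℂ f)
              ((Real.sqrt d : ℂ) * Complex.I)) ⊓
        Module.End.eigenspace (LinearMap.baseChange ℂ f)
          (-((Real.sqrt d : ℂ) * Complex.I)) := by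
  set s : ℂ := (Real.sqrt d : ℂ)
  have hs : s ≠ 0 := by simpa [s] using (Real.sqrt_pos.mpr hd).ne'
  have hs2 : s ^ 2 = d := by simp [s, ← Complex.ofReal_pow, Real.sq_sqrt hd.le]
  have hFI := LinearMap.commute_baseChange_of_comp_comm (A := ℂ) hcomm
  have hIsq : I.baseChange ℂ ^ 2 = Complex.I ^ 2 • 1 := by
    rw [LinearMap.baseChange_sq_of_comp_self_eq (hII.trans (neg_one_smul ℝ _).symm),
      Complex.I_sq, map_neg, map_one]
  have hfsq : f.baseChange ℂ ^ 2 = (s * Complex.I) ^ 2 • 1 := by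
    rw [LinearMap.baseChange_sq_of_comp_self_eq (hff.trans (neg_smul d _).symm), mul_pow, hs2,
      Complex.I_sq, map_neg, Complex.coe_algebraMap, mul_neg_one]
  rw [LinearMap.baseChange_comp, ← Module.End.mul_eq_comp,
    show s = Complex.I * -(s * Complex.I) by linear_combination s * Complex.I_sq,
    End.finrank_eigenspace_mul hFI Complex.I_ne_zero hIsq, neg_neg] at hmid
  have htot := End.finrank_eigenspace_inf_eigenspace_add hFI Complex.I_ne_zero hIsq
    (mul_ne_zero hs Complex.I_ne_zero) hfsq
  rw [finrank_baseChange, hdim] at htot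
  have hstarI : star Complex.I = -Complex.I := Complex.conj_I
  have hstar : star (s * Complex.I) = -(s * Complex.I) := by simp [s, Complex.conj_ofReal]
  have h₁ := finrank_eigenspace_inf_eigenspace_baseChange_star I f Complex.I (s * Complex.I)
  have h₂ := finrank_eigenspace_inf_eigenspace_baseChange_star I f Complex.I (-(s * Complex.I))
  rw [hstarI, hstar] at h₁
  rw [hstarI, star_neg, hstar, neg_neg] at h₂
  refine ⟨by omega, by omega, by omega, by omega, ?_⟩
  exact End.eigenspace_inf_eigenspace_neg_eq_orthogonal_inf
    (LinearMap.BilinForm.Nondegenerate.ofSeparatingLeft hBnd).baseChange hFI Complex.I_ne_zero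
    (mul_ne_zero hs Complex.I_ne_zero) hIsq hfsq (LinearMap.BilinForm.skew_baseChange hIskew)
    (LinearMap.BilinForm.skew_baseChange hfskew)

/-- Let `V` be real of dimension `4n` with a nondegenerate symmetric bilinear
form `B`, and `f, I` commuting anti-self-adjoint endomorphisms with `f² = −d·id`, `I² = −id`.
If the `√d`-eigenspace of `I∘f` on `V ⊗ ℂ` has dimension `2n`, then the four intersections of
`(±i)`-eigenspaces of `I` with `(±i√d)`-eigenspaces of `f` all have dimension `n`, and
`V^{1,0} ∩ W₂ = (V^{1,0} ∩ W₁)^⊥ ∩ W₂` with respect to the `ℂ`-bilinear extension of `B`. -/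
theorem stmt_10 (n : ℕ) (hn : 1 ≤ n)
    (V : Type*) [AddCommGroup V] [Module ℝ V] [FiniteDimensional ℝ V]
    (hdim : Module.finrank ℝ V = 4 * n)
    (B : LinearMap.BilinForm ℝ V)
    (hBsymm : ∀ x y, B x y = B y x)
    (hBnd : ∀ x, (∀ y, B x y = 0) → x = 0)
    (d : ℝ) (hd : 0 < d)
    (f I : V →ₗ[ℝ] V)
    (hcomm : f ∘ₗ I = I ∘ₗ f)
    (hff : f ∘ₗ f = -(d • (LinearMap.id : V →ₗ[ℝ] V)))
    (hII : I ∘ₗ I = -(LinearMap.id : V →ₗ[ℝ] V))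
    (hfskew : ∀ x y, B (f x) y = - B x (f y))
    (hIskew : ∀ x y, B (I x) y = - B x (I y))
    (hmid : Module.finrank ℂ
      ↥(Module.End.eigenspace (LinearMap.baseChange ℂ (I ∘ₗ f))
          ((Real.sqrt d : ℂ))) = 2 * n) :
    Module.finrank ℂ
      ↥(Module.End.eigenspace (LinearMap.baseChange ℂ I) Complex.I ⊓
        Module.End.eigenspace (LinearMap.baseChange ℂ f)
          ((Real.sqrt d : ℂ) * Complex.I)) = n ∧
    Module.finrank ℂ
      ↥(Module.End.eigenspace (LinearMap.baseChange ℂ I) Complex.I ⊓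
        Module.End.eigenspace (LinearMap.baseChange ℂ f)
          (-((Real.sqrt d : ℂ) * Complex.I))) = n ∧
    Module.finrank ℂ
      ↥(Module.End.eigenspace (LinearMap.baseChange ℂ I) (-Complex.I) ⊓
        Module.End.eigenspace (LinearMap.baseChange ℂ f)
          ((Real.sqrt d : ℂ) * Complex.I)) = n ∧
    Module.finrank ℂ
      ↥(Module.End.eigenspace (LinearMap.baseChange ℂ I) (-Complex.I) ⊓
        Module.End.eigenspace (LinearMap.baseChange ℂ f)
          (-((Real.sqrt d : ℂ) * Complex.I))) = n ∧
    Module.End.eigenspace (LinearMap.baseChange ℂ I) Complex.I ⊓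
        Module.End.eigenspace (LinearMap.baseChange ℂ f)
          (-((Real.sqrt d : ℂ) * Complex.I)) =
      LinearMap.BilinForm.orthogonal (LinearMap.BilinForm.baseChange ℂ B)
          (Module.End.eigenspace (LinearMap.baseChange ℂ I) Complex.I ⊓
            Module.End.eigenspace (LinearMap.baseChange ℂ f)
              ((Real.sqrt d : ℂ) * Complex.I)) ⊓
        Module.End.eigenspace (LinearMap.baseChange ℂ f)
          (-((Real.sqrt d : ℂ) * Complex.I)) :=
  stmt_10_general n V hdim B hBnd d hd f I hcomm hff hII hfskew hIskew hmid
end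

section
/- Let V be a finite-dimensional vector space over a field with a nondegenerate symmetric bilinear form B, and suppose V = V₁ ⊕ V₂ ⊕ V₃ with the three summands pairwise B-orthogonal. For i = 1, 2, 3 let gᵢ : V → V be an invertible linear map preserving B (B(gᵢ(x), gᵢ(y)) = B(x,y) for all x,y) with gᵢ(Vᵢ) = Vᵢ. If g₁ ∘ g₂ ∘ g₃ = id, then gᵢ(Vⱼ) = Vⱼ for all i, j ∈ {1, 2, 3}. -/
/-! An isometry preserving a subspace preserves its orthogonal complement, and in an orthogonal
decomposition `V = V₁ ⊕ V₂ ⊕ V₃` the complement of each summand is the sum of the other two.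
For `x ∈ V₁` this puts `g₃ x` in `V₃ᗮ = V₁ ⊕ V₂`, say `g₃ x = a + b`. Then
`g₂ b = g₁⁻¹ x - g₂ a` lies in `V₂` and, as `g₁⁻¹ x ∈ V₁` and `g₂ a ∈ V₂ᗮ`, also in `V₂ᗮ`;
so `b = 0` and `g₃` maps `V₁` into itself. By cyclic symmetry each `gᵢ` preserves `Vᵢ₊₁` besides
`Vᵢ`, hence also `Vᵢ₊₂ = (Vᵢ ⊕ Vᵢ₊₁)ᗮ`; in finite dimension these inclusions are equalities. -/

open Submodule

theorem LinearEquiv.map_eq_of_map_le {K V : Type*} [Field K] [AddCommGroup V] [Module K V]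
    [FiniteDimensional K V] (e : V ≃ₗ[K] V) {U : Submodule K V}
    (h : U.map (e : V →ₗ[K] V) ≤ U) : U.map (e : V →ₗ[K] V) = U :=
  eq_of_le_of_finrank_le h (e.finrank_map_eq U).ge

namespace LinearMap

variable {R M : Type*} [CommRing R] [AddCommGroup M] [Module R M] {B : LinearMap.BilinForm R M}

theorem IsOrthogonal.map_orthogonal_le {g : M ≃ₗ[R] M} (hg : B.IsOrthogonal g)
    {U : Submodule R M} (hU : U.map (g : M →ₗ[R] M) = U) :
    (B.orthogonal U).map (g : M →ₗ[R] M) ≤ B.orthogonal U := by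
  rintro _ ⟨v, hv, rfl⟩ u hu
  rw [← hU] at hu
  obtain ⟨w, hw, rfl⟩ := hu
  exact (hg w v).trans (hv w hw)

namespace BilinForm

theorem le_orthogonal_comm (hB : B.IsSymm) {U U' : Submodule R M}
    (h : U ≤ B.orthogonal U') : U' ≤ B.orthogonal U :=
  (le_orthogonal_orthogonal hB.isRefl).trans (orthogonal_le h)

theorem disjoint_orthogonal_of_sup_eq_top (hB : B.IsSymm) (hnd : B.SeparatingLeft)
    {U U' : Submodule R M} (hsup : U ⊔ U' = ⊤) (hU' : U' ≤ B.orthogonal U) :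
    Disjoint U (B.orthogonal U) := by
  refine disjoint_def.2 fun z hzU hz => hnd z fun y => ?_
  obtain ⟨w, hw, w', hw', rfl⟩ := mem_sup.1 (hsup ▸ mem_top : y ∈ U ⊔ U')
  rw [map_add, hB.eq z w, hz w hw, hU' hw' z hzU, add_zero]

theorem orthogonal_eq_of_sup_eq_top (hB : B.IsSymm) (hnd : B.SeparatingLeft)
    {U U' : Submodule R M} (hsup : U ⊔ U' = ⊤) (hU' : U' ≤ B.orthogonal U) :
    B.orthogonal U = U' := by
  refine le_antisymm (fun v hv => ?_) hU'
  obtain ⟨u, hu, u', hu', rfl⟩ := mem_sup.1 (hsup ▸ mem_top : v ∈ U ⊔ U')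
  have hu0 : u = 0 :=
    disjoint_def.1 (disjoint_orthogonal_of_sup_eq_top hB hnd hsup hU') u hu <| by
      simpa using sub_mem hv (hU' hu')
  simpa [hu0] using hu'

structure IsOrthogonalSum₃ (B : LinearMap.BilinForm R M) (U₁ U₂ U₃ : Submodule R M) : Prop where
  sup_eq_top : U₁ ⊔ U₂ ⊔ U₃ = ⊤
  le_orthogonal₁ : U₂ ⊔ U₃ ≤ B.orthogonal U₁
  le_orthogonal₂ : U₃ ⊔ U₁ ≤ B.orthogonal U₂
  le_orthogonal₃ : U₁ ⊔ U₂ ≤ B.orthogonal U₃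

namespace IsOrthogonalSum₃

variable {U₁ U₂ U₃ : Submodule R M}

theorem of_iSup_eq_top {W : Fin 3 → Submodule R M} (hsup : ⨆ j, W j = ⊤)
    (horth : ∀ i j, i ≠ j → W j ≤ B.orthogonal (W i)) (i : Fin 3) :
    B.IsOrthogonalSum₃ (W i) (W (i + 1)) (W (i + 2)) where
  sup_eq_top := by
    refine eq_top_iff.2 (hsup ▸ iSup_le fun j => ?_)
    obtain rfl | rfl | rfl : j = i ∨ j = i + 1 ∨ j = i + 2 := by omega
    · exact le_sup_left.trans le_sup_left
    · exact le_sup_right.trans le_sup_left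
    · exact le_sup_right
  le_orthogonal₁ := sup_le (horth _ _ (by omega)) (horth _ _ (by omega))
  le_orthogonal₂ := sup_le (horth _ _ (by omega)) (horth _ _ (by omega))
  le_orthogonal₃ := sup_le (horth _ _ (by omega)) (horth _ _ (by omega))

theorem rotate (h : B.IsOrthogonalSum₃ U₁ U₂ U₃) : B.IsOrthogonalSum₃ U₂ U₃ U₁ where
  sup_eq_top := by rw [sup_comm, ← sup_assoc, h.sup_eq_top]
  le_orthogonal₁ := h.le_orthogonal₂
  le_orthogonal₂ := h.le_orthogonal₃
  le_orthogonal₃ := h.le_orthogonal₁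

theorem orthogonal_eq₁ (hB : B.IsSymm) (hnd : B.SeparatingLeft)
    (h : B.IsOrthogonalSum₃ U₁ U₂ U₃) : B.orthogonal U₁ = U₂ ⊔ U₃ :=
  orthogonal_eq_of_sup_eq_top hB hnd (by rw [← sup_assoc, h.sup_eq_top]) h.le_orthogonal₁

theorem disjoint_orthogonal₁ (hB : B.IsSymm) (hnd : B.SeparatingLeft)
    (h : B.IsOrthogonalSum₃ U₁ U₂ U₃) : Disjoint U₁ (B.orthogonal U₁) :=
  disjoint_orthogonal_of_sup_eq_top hB hnd (by rw [← sup_assoc, h.sup_eq_top]) h.le_orthogonal₁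

theorem orthogonal_sup_eq₃ (hB : B.IsSymm) (hnd : B.SeparatingLeft)
    (h : B.IsOrthogonalSum₃ U₁ U₂ U₃) : B.orthogonal (U₁ ⊔ U₂) = U₃ :=
  orthogonal_eq_of_sup_eq_top hB hnd h.sup_eq_top (le_orthogonal_comm hB h.le_orthogonal₃)

theorem map_le₁_of_cycle (hB : B.IsSymm) (hnd : B.SeparatingLeft)
    (h : B.IsOrthogonalSum₃ U₁ U₂ U₃) {g₁ g₂ g₃ : M ≃ₗ[R] M}
    (hg₂ : B.IsOrthogonal g₂) (hg₃ : B.IsOrthogonal g₃)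
    (hU₁ : U₁.map (g₁ : M →ₗ[R] M) = U₁) (hU₂ : U₂.map (g₂ : M →ₗ[R] M) = U₂)
    (hU₃ : U₃.map (g₃ : M →ₗ[R] M) = U₃) (hid : ∀ x, g₁ (g₂ (g₃ x)) = x) :
    U₁.map (g₃ : M →ₗ[R] M) ≤ U₁ := by
  rintro _ ⟨x, hx, rfl⟩
  change g₃ x ∈ U₁
  have horth₃ := h.rotate.rotate.orthogonal_eq₁ hB hnd
  have hx₁₂ : g₃ x ∈ U₁ ⊔ U₂ :=
    horth₃ ▸ hg₃.map_orthogonal_le hU₃ (mem_map_of_mem (horth₃ ▸ mem_sup_left hx))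
  obtain ⟨a, ha, b, hb, hab⟩ := mem_sup.1 hx₁₂
  have hg₂₃ : g₂ (g₃ x) ∈ U₁ := by
    obtain ⟨u, hu, hux⟩ := hU₁.symm ▸ hx
    rw [g₁.injective ((hid x).trans hux.symm)]
    exact hu
  have h₁₂ : U₁ ≤ B.orthogonal U₂ := le_sup_right.trans h.le_orthogonal₂
  have hga : g₂ a ∈ B.orthogonal U₂ := hg₂.map_orthogonal_le hU₂ (mem_map_of_mem (h₁₂ ha))
  have hgb : g₂ b = 0 := by
    refine disjoint_def.1 (h.rotate.disjoint_orthogonal₁ hB hnd) _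
      (hU₂ ▸ mem_map_of_mem hb) ?_
    have : g₂ b = g₂ (g₃ x) - g₂ a := by rw [← hab, map_add]; abel
    exact this ▸ sub_mem (h₁₂ hg₂₃) hga
  rw [← hab, g₂.map_eq_zero_iff.1 hgb, add_zero]
  exact ha

theorem map_le₃ (hB : B.IsSymm) (hnd : B.SeparatingLeft) (h : B.IsOrthogonalSum₃ U₁ U₂ U₃)
    {g : M ≃ₗ[R] M} (hg : B.IsOrthogonal g) (hU₁ : U₁.map (g : M →ₗ[R] M) = U₁)
    (hU₂ : U₂.map (g : M →ₗ[R] M) = U₂) : U₃.map (g : M →ₗ[R] M) ≤ U₃ := by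
  have := hg.map_orthogonal_le (U := U₁ ⊔ U₂) (by rw [Submodule.map_sup, hU₁, hU₂])
  rwa [h.orthogonal_sup_eq₃ hB hnd] at this

end IsOrthogonalSum₃

end BilinForm

end LinearMap

/-- Let `V = V₁ ⊕ V₂ ⊕ V₃` be an orthogonal decomposition for a nondegenerate
symmetric bilinear form `B`, and let `gᵢ` be isometries with `gᵢ(Vᵢ) = Vᵢ`.  If
`g₁ ∘ g₂ ∘ g₃ = id`, then each `gᵢ` preserves each `Vⱼ`. -/
theorem stmt_12 (F : Type*) [Field F]
    (V : Type*) [AddCommGroup V] [Module F V] [FiniteDimensional F V]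
    (B : LinearMap.BilinForm F V)
    (hBsymm : ∀ x y, B x y = B y x)
    (hBnd : ∀ x, (∀ y, B x y = 0) → x = 0)
    (W : Fin 3 → Submodule F V)
    (hint : DirectSum.IsInternal W)
    (horth : ∀ i j, i ≠ j → ∀ x ∈ W i, ∀ y ∈ W j, B x y = 0)
    (g : Fin 3 → (V ≃ₗ[F] V))
    (hgB : ∀ i (x y : V), B (g i x) (g i y) = B x y)
    (hgW : ∀ i, (W i).map (g i).toLinearMap = W i)
    (hgid : ∀ x : V, g 0 (g 1 (g 2 x)) = x) :
    ∀ i j, (W j).map (g i).toLinearMap = W j := by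
  have hB : B.IsSymm := ⟨hBsymm⟩
  have hW := LinearMap.BilinForm.IsOrthogonalSum₃.of_iSup_eq_top hint.submodule_iSup_eq_top
    (fun i j hij y hy x hx => horth i j hij x hx y hy)
  have hcycle : ∀ i x, g (i + 1) (g (i + 2) (g i x)) = x := by
    have h₁ : ∀ x, g 1 (g 2 (g 0 x)) = x := fun x => (g 0).injective (hgid (g 0 x))
    have h₂ : ∀ x, g 2 (g 0 (g 1 x)) = x := fun x => (g 1).injective (h₁ (g 1 x))
    intro i
    fin_cases i
    exacts [h₁, h₂, hgid]
  have hnext : ∀ i, (W (i + 1)).map (g i).toLinearMap = W (i + 1) := fun i =>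
    (g i).map_eq_of_map_le <| (hW i).rotate.map_le₁_of_cycle hB hBnd
      (hgB _) (hgB _) (hgW _) (hgW _) (hgW _) (hcycle i)
  have hprev : ∀ i, (W (i + 2)).map (g i).toLinearMap = W (i + 2) := fun i =>
    (g i).map_eq_of_map_le <| (hW i).map_le₃ hB hBnd (hgB i) (hgW i) (hnext i)
  intro i j
  obtain rfl | rfl | rfl : j = i ∨ j = i + 1 ∨ j = i + 2 := by omega
  exacts [hgW j, hnext i, hprev i]
end

section
/- Let R be a commutative ring and x, y ∈ R a regular sequence (x is a nonzerodivisor on R and the image of y is a nonzerodivisor on R/(x)). Let J ⊆ R be an ideal such that no nonzero element of R/J is annihilated by both x and y. Then: (i) Tor_n^R(R/(x,y), R/J) = 0 for all n ≥ 2; (ii) Tor_n^R((x,y), J) = 0 for all n ≥ 1, where (x,y) and J are regarded as R-modules; and (iii) the natural multiplication map (x,y) ⊗_R J → R is injective, with image the product ideal (x,y)·J. -/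
/-!
`Torₙ(N, M)` is the homology of `N ⊗ P` for a projective resolution `P` of `M`. The terms of `P`
are flat, so a short exact sequence in `N` gives a long exact homology sequence. For the sequences
`0 → R --x--> R → R/(x) → 0` and `0 → R/(x) --y--> R/(x) → R/(x,y) → 0`, the connecting map is
injective in the relevant degree, because `Torₙ(R, M) = 0` for `n ≥ 1`, and its image is killed by
the element being multiplied by. So `Tor₂(R/(x,y), M)` embeds into the elements of `M` that are
killed by both `x` and `y`, and the higher groups vanish. Part (ii) then follows from
`0 → (x,y) → R → R/(x,y) → 0`.

Injectivity of `(x,y) ⊗ J → R` is elementary: every tensor is `x ⊗ a + y ⊗ b`, and `xa + yb = 0`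
forces `b = xc`, `a = -yc` with `c ∈ J`, so the tensor is `-(yx ⊗ c) + xy ⊗ c = 0`.
-/

open CategoryTheory CategoryTheory.Limits CategoryTheory.MonoidalCategory
open scoped TensorProduct

lemma HomologicalComplex.homologyMap_smul_id {R : Type u} [CommRing R] {ι : Type*}
    {c : ComplexShape ι} (K : HomologicalComplex (ModuleCat.{u} R) c) (r : R) (i : ι) :
    homologyMap (r • 𝟙 K) i = r • 𝟙 (K.homology i) := by
  change ShortComplex.homologyMap (r • 𝟙 (K.sc i)) = _
  rw [ShortComplex.homologyMap_smul, ShortComplex.homologyMap_id]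
  rfl

namespace CategoryTheory.ShortComplex.ShortExact

variable {C : Type*} [Category C] [Abelian C] {S : ShortComplex (ChainComplex C ℕ)}

lemma isZero_X₃_homology_succ (hS : S.ShortExact) {n : ℕ}
    (h₂ : IsZero (S.X₂.homology (n + 1))) (h₁ : IsZero (S.X₁.homology n)) :
    IsZero (S.X₃.homology (n + 1)) :=
  (hS.homology_exact₃ (n + 1) n rfl).isZero_of_both_zeros (h₂.eq_of_src _ _) (h₁.eq_of_tgt _ _)

lemma isZero_X₁_homology (hS : S.ShortExact) {n : ℕ}
    (h₃ : IsZero (S.X₃.homology (n + 1))) (h₂ : IsZero (S.X₂.homology n)) :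
    IsZero (S.X₁.homology n) :=
  (hS.homology_exact₁ (n + 1) n rfl).isZero_of_both_zeros (h₃.eq_of_src _ _) (h₂.eq_of_tgt _ _)

end CategoryTheory.ShortComplex.ShortExact

namespace Submodule

variable {R M N : Type*} [CommRing R] [AddCommGroup M] [Module R M] [AddCommGroup N] [Module R N]

lemma torsionBySet_eq_bot_of_injective {f : M →ₗ[R] N} (hf : Function.Injective f) {s : Set R}
    (h : torsionBySet R N s = ⊥) : torsionBySet R M s = ⊥ := by
  refine (Submodule.eq_bot_iff _).2 fun m hm => hf ?_
  rw [map_zero]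
  refine (Submodule.eq_bot_iff _).1 h _ ((mem_torsionBySet_iff _ _).2 fun a => ?_)
  rw [← map_smul, (mem_torsionBySet_iff _ _).1 hm a, map_zero]

lemma torsionBySet_eq_bot_of_isSMulRegular {s : Set R} {r : R} (hr : r ∈ s)
    (h : IsSMulRegular M r) : torsionBySet R M s = ⊥ := by
  refine le_bot_iff.1 ((torsionBySet_le_torsionBySet_of_subset (s := {r}) ?_).trans_eq ?_)
  · exact Set.singleton_subset_iff.2 hr
  · rwa [torsionBySet_singleton_eq, ← isSMulRegular_iff_torsionBy_eq_bot]

lemma subsingleton_of_torsionBySet_empty_eq_bot (h : torsionBySet R M ∅ = ⊥) :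
    Subsingleton M :=
  subsingleton_of_forall_eq 0 fun m =>
    (Submodule.eq_bot_iff _).1 h m ((mem_torsionBySet_iff _ _).2 fun a => a.2.elim)

end Submodule

namespace Ideal

variable {R : Type*} [CommRing R] {x y : R}

lemma span_singleton_le_span_pair (x y : R) : span {x} ≤ span {x, y} :=
  span_mono (Set.singleton_subset_iff.2 (Set.mem_insert x {y}))

lemma torsionBySet_quotient_pair_eq_bot {J : Ideal R}
    (hJ : ∀ r : R, x * r ∈ J → y * r ∈ J → r ∈ J) :
    Submodule.torsionBySet R (R ⧸ J) {x, y} = ⊥ := by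
  refine (Submodule.eq_bot_iff _).2 fun q hq => ?_
  obtain ⟨r, rfl⟩ := Quotient.mk_surjective q
  rw [Submodule.mem_torsionBySet_iff] at hq
  have hmem (a : R) (ha : a ∈ ({x, y} : Set R)) : a * r ∈ J :=
    Quotient.eq_zero_iff_mem.1 (hq ⟨a, ha⟩)
  exact Quotient.eq_zero_iff_mem.2 (hJ r (hmem x (by simp)) (hmem y (by simp)))

lemma exists_eq_tmul_add_tmul {N : Type*} [AddCommGroup N] [Module R N]
    (t : span {x, y} ⊗[R] N) :
    ∃ a b : N, t = ⟨x, subset_span (Set.mem_insert x {y})⟩ ⊗ₜ a +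
      ⟨y, subset_span (Set.mem_insert_of_mem x rfl)⟩ ⊗ₜ b := by
  induction t using TensorProduct.induction_on with
  | zero => exact ⟨0, 0, by simp⟩
  | tmul i n =>
    obtain ⟨a, b, hab⟩ := mem_span_pair.1 i.2
    refine ⟨a • n, b • n, ?_⟩
    rw [← TensorProduct.smul_tmul, ← TensorProduct.smul_tmul, ← TensorProduct.add_tmul]
    congr
    exact Subtype.ext hab.symm
  | add t₁ t₂ h₁ h₂ =>
    obtain ⟨a₁, b₁, rfl⟩ := h₁
    obtain ⟨a₂, b₂, rfl⟩ := h₂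
    refine ⟨a₁ + a₂, b₁ + b₂, ?_⟩
    rw [TensorProduct.tmul_add, TensorProduct.tmul_add]
    abel

theorem mulMap_span_pair_injective (hx : IsSMulRegular R x)
    (hy : IsSMulRegular (R ⧸ span {x}) y) {J : Ideal R}
    (hJ : ∀ r : R, x * r ∈ J → y * r ∈ J → r ∈ J) :
    Function.Injective (Submodule.mulMap (span {x, y}) J) := by
  refine (injective_iff_map_eq_zero _).2 fun t ht => ?_
  obtain ⟨a, b, rfl⟩ := exists_eq_tmul_add_tmul t
  have hab : x * a + y * b = 0 := by simpa using ht
  obtain ⟨c, hc⟩ : ∃ c, c * x = b := mem_span_singleton'.1 <|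
    mem_of_isSMulRegular_quotient_of_smul_mem hy <|
      mem_span_singleton'.2 ⟨-a, by rw [smul_eq_mul]; linear_combination -hab⟩
  have ha : (a : R) = -(y * c) := hx <| by
    change x * a = x * -(y * c)
    linear_combination hab + y * hc
  have hcJ : c ∈ J := hJ c (by rw [mul_comm, hc]; exact b.2)
    (by rw [← neg_neg (y * c), ← ha]; exact neg_mem a.2)
  obtain rfl : a = -(y • ⟨c, hcJ⟩) := Subtype.ext ha
  obtain rfl : b = x • ⟨c, hcJ⟩ := Subtype.ext (by rw [← hc, mul_comm]; rfl)
  rw [TensorProduct.tmul_neg, TensorProduct.tmul_smul, TensorProduct.tmul_smul,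
    TensorProduct.smul_tmul', TensorProduct.smul_tmul', neg_add_eq_zero]
  congr 1
  exact Subtype.ext (mul_comm y x)

end Ideal

namespace ModuleCat

variable {R : Type u} [CommRing R] {x y : R}

noncomputable section

def smulQuotSpanSingleton (x : R) : ShortComplex (ModuleCat.{u} R) :=
  ShortComplex.mk (x • 𝟙 (of R R)) (ofHom (Ideal.span {x}).mkQ) <|
    hom_ext <| LinearMap.ext fun r =>
      Ideal.Quotient.eq_zero_iff_mem.2 (Ideal.mul_mem_right r _ (Ideal.mem_span_singleton_self x))

lemma shortExact_smulQuotSpanSingleton (hx : IsSMulRegular R x) :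
    (smulQuotSpanSingleton x).ShortExact := by
  refine shortComplex_shortExact _ (fun (r : R) => ?_) hx (Submodule.mkQ_surjective _)
  change Ideal.Quotient.mk _ r = 0 ↔ ∃ a, x * a = r
  rw [Ideal.Quotient.eq_zero_iff_mem, Ideal.mem_span_singleton']
  simp only [mul_comm]

def smulQuotSpanPair (x y : R) : ShortComplex (ModuleCat.{u} R) :=
  ShortComplex.mk (y • 𝟙 (of R (R ⧸ Ideal.span {x})))
    (ofHom (Submodule.factor (Ideal.span_singleton_le_span_pair x y))) <|
      hom_ext <| LinearMap.ext fun q => by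
        obtain ⟨r, rfl⟩ := Ideal.Quotient.mk_surjective q
        exact Ideal.Quotient.eq_zero_iff_mem.2 (Ideal.mem_span_pair.2 ⟨0, r, by simp [mul_comm]⟩)

lemma shortExact_smulQuotSpanPair (hy : IsSMulRegular (R ⧸ Ideal.span {x}) y) :
    (smulQuotSpanPair x y).ShortExact := by
  refine shortComplex_shortExact _ (fun (q : R ⧸ Ideal.span {x}) => ?_) hy
    (Submodule.factor_surjective (Ideal.span_singleton_le_span_pair x y))
  obtain ⟨r, rfl⟩ := Ideal.Quotient.mk_surjective q
  change Ideal.Quotient.mk _ r = 0 ↔ ∃ q', y • q' = Ideal.Quotient.mk _ r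
  rw [Ideal.Quotient.eq_zero_iff_mem, Ideal.mem_span_pair]
  constructor
  · rintro ⟨a, b, hab⟩
    refine ⟨Ideal.Quotient.mk _ b, Ideal.Quotient.eq.2 (Ideal.mem_span_singleton'.2 ⟨-a, ?_⟩)⟩
    change -a * x = y * b - r
    linear_combination -hab
  · rintro ⟨q', hq'⟩
    obtain ⟨b, rfl⟩ := Ideal.Quotient.mk_surjective q'
    obtain ⟨a, ha⟩ := Ideal.mem_span_singleton'.1 (Ideal.Quotient.eq.1 hq')
    change a * x = y * b - r at ha
    exact ⟨-a, b, by linear_combination -ha⟩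

def subtypeMkQShortComplex {M : Type u} [AddCommGroup M] [Module R M] (N : Submodule R M) :
    ShortComplex (ModuleCat.{u} R) :=
  shortComplexOfCompEqZero N.subtype N.mkQ (LinearMap.exact_subtype_mkQ N).linearMap_comp_eq_zero

lemma shortExact_subtypeMkQShortComplex {M : Type u} [AddCommGroup M] [Module R M]
    (N : Submodule R M) : (subtypeMkQShortComplex N).ShortExact :=
  shortComplex_shortExact _ (LinearMap.exact_subtype_mkQ N) N.injective_subtype N.mkQ_surjective

abbrev tensorLeftComplex (N : ModuleCat.{u} R) (P : ChainComplex (ModuleCat.{u} R) ℕ) :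
    ChainComplex (ModuleCat.{u} R) ℕ :=
  (((tensoringLeft (ModuleCat.{u} R)).obj N).mapHomologicalComplex _).obj P

abbrev tensorLeftComplexMap {N N' : ModuleCat.{u} R} (φ : N ⟶ N')
    (P : ChainComplex (ModuleCat.{u} R) ℕ) : tensorLeftComplex N P ⟶ tensorLeftComplex N' P :=
  (NatTrans.mapHomologicalComplex ((tensoringLeft (ModuleCat.{u} R)).map φ) _).app P

section TensorLeftComplex

variable (P : ChainComplex (ModuleCat.{u} R) ℕ)

lemma tensorLeftComplexMap_smul_id (N : ModuleCat.{u} R) (r : R) :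
    tensorLeftComplexMap (r • 𝟙 N) P = r • 𝟙 _ := by
  ext n : 1
  simp only [NatTrans.mapHomologicalComplex_app_f, curriedTensor_map_app,
    MonoidalLinear.smul_whiskerRight, id_whiskerRight, HomologicalComplex.smul_f_apply,
    HomologicalComplex.id_f]
  rfl

@[simps]
def _root_.CategoryTheory.ShortComplex.tensorLeftComplex (S : ShortComplex (ModuleCat.{u} R)) :
    ShortComplex (ChainComplex (ModuleCat.{u} R) ℕ) where
  f := tensorLeftComplexMap S.f P
  g := tensorLeftComplexMap S.g P
  zero := by
    ext n : 1
    exact (comp_whiskerRight S.f S.g (P.X n)).symm.trans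
      (by rw [S.zero, MonoidalPreadditive.zero_whiskerRight]; rfl)

def tensorLeftComplexUnitIso : tensorLeftComplex (of R R) P ≅ P :=
  HomologicalComplex.Hom.isoOfComponents (fun i => λ_ (P.X i))
    (fun i j _ => (leftUnitor_naturality (P.d i j)).symm)

variable {P}

lemma shortExact_tensorLeftComplex (hP : ∀ n, Module.Flat R (P.X n))
    {S : ShortComplex (ModuleCat.{u} R)} (hS : S.ShortExact) :
    (S.tensorLeftComplex P).ShortExact :=
  HomologicalComplex.shortExact_of_degreewise_shortExact _ fun n =>
    haveI := hP n; hS.map_of_exact (tensorRight (P.X n))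

/-- The connecting map `H_{n+1}(Q ⊗ P) → H_n(N ⊗ P)` of `0 → N --r--> N → Q → 0` is injective
when `H_{n+1}(N ⊗ P) = 0`, and its image is killed by `r`. -/
lemma torsionBySet_homology_succ_eq_bot {N Q : ModuleCat.{u} R} {r : R} {g : N ⟶ Q}
    {hg : (r • 𝟙 N) ≫ g = 0} (hS : (ShortComplex.mk _ _ hg).ShortExact)
    (hP : ∀ n, Module.Flat R (P.X n)) {s : Set R} {n : ℕ}
    (h₁ : IsZero ((tensorLeftComplex N P).homology (n + 1)))
    (h₀ : Submodule.torsionBySet R ((tensorLeftComplex N P).homology n) (insert r s) = ⊥) :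
    Submodule.torsionBySet R ((tensorLeftComplex Q P).homology (n + 1)) s = ⊥ := by
  have hT := shortExact_tensorLeftComplex hP hS
  let δ : (tensorLeftComplex Q P).homology (n + 1) ⟶ (tensorLeftComplex N P).homology n :=
    hT.δ (n + 1) n rfl
  have hδ_inj : Function.Injective δ :=
    (mono_iff_injective _).1 <| (hT.homology_exact₃ (n + 1) n rfl).mono_g (h₁.eq_of_src _ _)
  have hδ_smul : δ ≫ (r • 𝟙 _) = 0 := by
    rw [← HomologicalComplex.homologyMap_smul_id, ← tensorLeftComplexMap_smul_id]
    exact hT.δ_comp (n + 1) n rfl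
  refine (Submodule.eq_bot_iff _).2 fun u hu => hδ_inj ((?_ : δ u = 0).trans (map_zero _).symm)
  refine (Submodule.eq_bot_iff _).1 h₀ _ ((Submodule.mem_torsionBySet_iff _ _).2 ?_)
  rintro ⟨a, rfl | ha⟩
  · exact congr($(hδ_smul).hom u)
  · rw [← map_smul, (Submodule.mem_torsionBySet_iff _ _).1 hu ⟨a, ha⟩, map_zero]

theorem isZero_homology_tensorLeftComplex_quotient_span_pair (hx : IsSMulRegular R x)
    (hy : IsSMulRegular (R ⧸ Ideal.span {x}) y) (hP : ∀ n, Module.Flat R (P.X n))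
    (hR : ∀ n, IsZero ((tensorLeftComplex (of R R) P).homology (n + 1)))
    (hR₀ : Submodule.torsionBySet R ((tensorLeftComplex (of R R) P).homology 0) {x, y} = ⊥)
    (n : ℕ) (hn : 2 ≤ n) :
    IsZero ((tensorLeftComplex (of R (R ⧸ Ideal.span {x, y})) P).homology n) := by
  have hSx := shortExact_tensorLeftComplex hP (shortExact_smulQuotSpanSingleton hx)
  have hSy := shortExact_tensorLeftComplex hP (shortExact_smulQuotSpanPair hy)
  have hRx (k : ℕ) :
      IsZero ((tensorLeftComplex (of R (R ⧸ Ideal.span {x})) P).homology (k + 2)) :=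
    hSx.isZero_X₃_homology_succ (hR (k + 1)) (hR k)
  have hRx₁ : Submodule.torsionBySet R
      ((tensorLeftComplex (of R (R ⧸ Ideal.span {x})) P).homology 1) {y} = ⊥ :=
    torsionBySet_homology_succ_eq_bot (shortExact_smulQuotSpanSingleton hx) hP (hR 0) hR₀
  obtain ⟨k, rfl⟩ : ∃ k, n = k + 2 := ⟨n - 2, by omega⟩
  cases k with
  | zero =>
    have hRxy₂ := torsionBySet_homology_succ_eq_bot (s := ∅) (shortExact_smulQuotSpanPair hy) hP
      (hRx 0) (by rwa [← Set.singleton_def])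
    have := Submodule.subsingleton_of_torsionBySet_empty_eq_bot hRxy₂
    exact isZero_of_subsingleton _
  | succ k => exact hSy.isZero_X₃_homology_succ (hRx (k + 1)) (hRx k)

end TensorLeftComplex

section ProjectiveResolution

variable {M : ModuleCat.{u} R} (Pr : ProjectiveResolution M)

lemma flat_projectiveResolution_X (n : ℕ) : Module.Flat R (Pr.complex.X n) :=
  haveI := (IsProjective.iff_projective _).2 (Pr.projective n)
  Module.Flat.of_projective

lemma isZero_homology_succ_tensorLeftComplex_unit (n : ℕ) :
    IsZero ((tensorLeftComplex (of R R) Pr.complex).homology (n + 1)) :=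
  (Pr.complex_exactAt_succ n).isZero_homology.of_iso
    ((HomologicalComplex.homologyFunctor _ _ (n + 1)).mapIso (tensorLeftComplexUnitIso _))

def homologyZeroTensorLeftComplexUnitIso :
    (tensorLeftComplex (of R R) Pr.complex).homology 0 ≅ M :=
  (HomologicalComplex.homologyFunctor _ _ 0).mapIso (tensorLeftComplexUnitIso Pr.complex) ≪≫
    @asIso _ _ _ _ (HomologicalComplex.homologyMap Pr.π 0)
      ((quasiIsoAt_iff_isIso_homologyMap Pr.π 0).1 inferInstance) ≪≫
    HomologicalComplex.singleObjHomologySelfIso _ 0 M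

lemma torsionBySet_homology_zero_tensorLeftComplex_unit {s : Set R}
    (hM : Submodule.torsionBySet R M s = ⊥) :
    Submodule.torsionBySet R ((tensorLeftComplex (of R R) Pr.complex).homology 0) s = ⊥ :=
  Submodule.torsionBySet_eq_bot_of_injective
    (homologyZeroTensorLeftComplexUnitIso Pr).toLinearEquiv.injective hM

end ProjectiveResolution

theorem isZero_Tor_quotient_span_pair (hx : IsSMulRegular R x)
    (hy : IsSMulRegular (R ⧸ Ideal.span {x}) y) {M : ModuleCat.{u} R}
    (hM : Submodule.torsionBySet R M {x, y} = ⊥) (n : ℕ) (hn : 2 ≤ n) :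
    IsZero (((Tor (ModuleCat.{u} R) n).obj (of R (R ⧸ Ideal.span {x, y}))).obj M) := by
  obtain ⟨Pr⟩ := HasProjectiveResolution.out (Z := M)
  exact (isZero_homology_tensorLeftComplex_quotient_span_pair hx hy
    (flat_projectiveResolution_X Pr) (isZero_homology_succ_tensorLeftComplex_unit Pr)
    (torsionBySet_homology_zero_tensorLeftComplex_unit Pr hM) n hn).of_iso
    (Pr.isoLeftDerivedObj _ n)

theorem isZero_Tor_span_pair (hx : IsSMulRegular R x)
    (hy : IsSMulRegular (R ⧸ Ideal.span {x}) y) {M : ModuleCat.{u} R}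
    (hM : Submodule.torsionBySet R M {x, y} = ⊥) (n : ℕ) (hn : 1 ≤ n) :
    IsZero (((Tor (ModuleCat.{u} R) n).obj (of R (Ideal.span {x, y}))).obj M) := by
  obtain ⟨Pr⟩ := HasProjectiveResolution.out (Z := M)
  obtain ⟨k, rfl⟩ : ∃ k, n = k + 1 := ⟨n - 1, by omega⟩
  have hS := shortExact_tensorLeftComplex (flat_projectiveResolution_X Pr)
    (shortExact_subtypeMkQShortComplex (Ideal.span {x, y}))
  refine IsZero.of_iso (hS.isZero_X₁_homology ?_ ?_) (Pr.isoLeftDerivedObj _ _)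
  · exact isZero_homology_tensorLeftComplex_quotient_span_pair hx hy
      (flat_projectiveResolution_X Pr) (isZero_homology_succ_tensorLeftComplex_unit Pr)
      (torsionBySet_homology_zero_tensorLeftComplex_unit Pr hM) (k + 2) (by omega)
  · exact isZero_homology_succ_tensorLeftComplex_unit Pr k

end

end ModuleCat

/-- Let `x, y` be a regular sequence in a commutative ring `R` and `J` an ideal
such that no nonzero element of `R/J` is annihilated by both `x` and `y`.  Then
`Tor_n(R/(x,y), R/J) = 0` for `n ≥ 2`, `Tor_n((x,y), J) = 0` for `n ≥ 1`, and the natural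
multiplication map `(x,y) ⊗ J → R` is injective with image the product ideal `(x,y)·J`. -/
theorem stmt_14 (R : Type u) [CommRing R]
    (x y : R)
    (hx : ∀ r : R, x * r = 0 → r = 0)
    (hy : ∀ r : R, y * r ∈ Ideal.span {x} → r ∈ Ideal.span {x})
    (J : Ideal R)
    (hJ : ∀ r : R, x * r ∈ J → y * r ∈ J → r ∈ J) :
    (∀ m : ℕ, 2 ≤ m →
      IsZero (((Tor (ModuleCat.{u} R) m).obj
        (ModuleCat.of R (R ⧸ Ideal.span {x, y}))).obj
        (ModuleCat.of R (R ⧸ J)))) ∧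
    (∀ m : ℕ, 1 ≤ m →
      IsZero (((Tor (ModuleCat.{u} R) m).obj
        (ModuleCat.of R ↥(Ideal.span {x, y}))).obj
        (ModuleCat.of R ↥J))) ∧
    Function.Injective
      (TensorProduct.lift ((LinearMap.mul R R).compl₁₂
        (Submodule.subtype (Ideal.span {x, y})) (Submodule.subtype J))) ∧
    LinearMap.range
      (TensorProduct.lift ((LinearMap.mul R R).compl₁₂
        (Submodule.subtype (Ideal.span {x, y})) (Submodule.subtype J)))
      = Ideal.span {x, y} * J := by
  have hx' : IsSMulRegular R x := isSMulRegular_iff_right_eq_zero_of_smul.2 hx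
  have hy' : IsSMulRegular (R ⧸ Ideal.span {x}) y :=
    (isSMulRegular_quotient_iff_mem_of_smul_mem _ _).2 hy
  have hJ' : Submodule.torsionBySet R J {x, y} = ⊥ :=
    Submodule.torsionBySet_eq_bot_of_isSMulRegular (Set.mem_insert x {y}) (hx'.submodule J x)
  exact ⟨ModuleCat.isZero_Tor_quotient_span_pair hx' hy'
      (Ideal.torsionBySet_quotient_pair_eq_bot hJ),
    ModuleCat.isZero_Tor_span_pair hx' hy' hJ',
    Ideal.mulMap_span_pair_injective hx' hy' hJ,
    Submodule.mulMap_range _ _⟩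
end
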